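/- arXiv:math/0505095 — 8 statements merged into one kernel-verified Lean document; each statement's English description precedes it below -/
import Mathlib

section
/- Let λ₁ > -λ₂ > λ₃ > 0 be real numbers with λ₂ < 0 < λ₃ < λ₁ (i.e., λ₁ > -λ₂ > λ₃ > 0). Then (1/λ₁ + 1/λ₂ + 1/λ₃)(λ₁ + λ₂ + λ₃) > 1. -/
/-! The identity `(a + b + c)(ab + bc + ca) - abc = (a + b)(b + c)(c + a)` turns the claim into a sign
count: for `l₁ > -l₂ > l₃ > 0` the factors `l₁ + l₂`, `l₂ + l₃`, `l₃ + l₁` have signs `+, -, +` and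
`l₁ l₂ l₃ < 0`. -/

theorem one_div_add_one_div_add_one_div_mul_add_add_sub_one {K : Type*} [Field K] {a b c : K}
    (ha : a ≠ 0) (hb : b ≠ 0) (hc : c ≠ 0) :
    (1 / a + 1 / b + 1 / c) * (a + b + c) - 1 = (a + b) * (b + c) * (c + a) / (a * b * c) := by
  field_simp
  ring

theorem stmt_0 (l1 l2 l3 : ℝ) (h1 : l1 > -l2) (h2 : -l2 > l3) (h3 : l3 > 0) :
    (1 / l1 + 1 / l2 + 1 / l3) * (l1 + l2 + l3) > 1 := by
  have hl1 : 0 < l1 := by linarith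
  have hl2 : l2 < 0 := by linarith
  have hnum : (l1 + l2) * (l2 + l3) * (l3 + l1) < 0 :=
    mul_neg_of_neg_of_pos (mul_neg_of_pos_of_neg (by linarith) (by linarith)) (by linarith)
  have hden : l1 * l2 * l3 < 0 := mul_neg_of_neg_of_pos (mul_neg_of_pos_of_neg hl1 hl2) h3
  have key := one_div_add_one_div_add_one_div_mul_add_add_sub_one hl1.ne' hl2.ne h3.ne'
  have : 0 < (l1 + l2) * (l2 + l3) * (l3 + l1) / (l1 * l2 * l3) := div_pos_of_neg_of_neg hnum hden
  linarith
end

section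
/- Let n ≥ 3 and λ₁, ..., λₙ be real numbers with λ₁ > -λ₂ > λ₃ > ... > (-1)^{n-1} λₙ > 0. Then σ₃(Λ) > σ₁(Λ)·σ₂(Λ), where σⱼ denotes the j-th elementary symmetric function of λ₁, ..., λₙ. -/
/-- Alternating sum of a list: `altSum [a,b,c,...] = a - b + c - ...` -/
def altSum : List ℝ → ℝ
  | [] => 0
  | a :: L => a - altSum L

lemma altSum_ofFn : ∀ (n : ℕ) (g : Fin n → ℝ),
    altSum (List.ofFn g) = ∑ i : Fin n, (-1 : ℝ) ^ (i : ℕ) * g i := by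
  intro n
  induction n with
  | zero => intro g; simp [altSum]
  | succ m ih =>
    intro g
    rw [List.ofFn_succ, Fin.sum_univ_succ]
    show g 0 - altSum (List.ofFn fun i : Fin m => g i.succ) = _
    rw [ih]
    have h2 : ∑ i : Fin m, (-1 : ℝ) ^ ((i : ℕ) + 1) * g i.succ =
        -1 * ∑ i : Fin m, (-1 : ℝ) ^ (i : ℕ) * g i.succ := by
      rw [Finset.mul_sum]
      exact Finset.sum_congr rfl (fun i _ => by ring)
    simp only [Fin.val_succ, Fin.val_zero, pow_zero, one_mul, h2]
    ring

/-- Bounds for alternating sums of strictly decreasing positive lists. -/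
lemma altSum_bounds : ∀ (L : List ℝ), L.Pairwise (· > ·) → (∀ x ∈ L, 0 < x) →
    0 ≤ altSum L ∧ ∀ b : ℝ, 0 < b → (∀ x ∈ L, x < b) → altSum L < b := by
  intro L
  induction L with
  | nil => intro _ _; exact ⟨le_refl 0, fun b hb _ => hb⟩
  | cons a L ih =>
    intro hp hpos
    have hpL := hp.of_cons
    have hposL : ∀ x ∈ L, 0 < x := fun x hx => hpos x (List.mem_cons_of_mem a hx)
    have ha : 0 < a := hpos a (List.mem_cons_self)
    have hlt : ∀ x ∈ L, x < a := fun x hx => (List.pairwise_cons.mp hp).1 x hx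
    obtain ⟨h0, hub⟩ := ih hpL hposL
    constructor
    · have : altSum L < a := hub a ha hlt
      show 0 ≤ a - altSum L
      linarith
    · intro b hb hball
      have hab : a < b := hball a (List.mem_cons_self)
      show a - altSum L < b
      linarith

/-- Key cube inequality: for `a > b > t ≥ 0`, `(a - b + t)^3 < a^3 - b^3 + t^3`. -/
lemma cube_ineq {a b t : ℝ} (hab : b < a) (htb : t < b) (ht : 0 ≤ t) :
    (a - b + t) ^ 3 < a ^ 3 - b ^ 3 + t ^ 3 := by
  nlinarith [mul_pos (sub_pos.mpr hab) (sub_pos.mpr htb), sq_nonneg (a - b + t),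
    sq_nonneg (a + t), mul_pos (sub_pos.mpr (ht.trans_lt (htb.trans hab))) (sub_pos.mpr htb),
    sq_nonneg t, sq_nonneg (a - b), mul_nonneg ht (sub_pos.mpr htb).le]

/-- For a strictly decreasing positive list, `(altSum L)^3 ≤ altSum (L.map (·^3))`,
with strictness for lists of length at least 2. -/
lemma altSum_cube : ∀ (L : List ℝ), L.Pairwise (· > ·) → (∀ x ∈ L, 0 < x) →
    (altSum L) ^ 3 ≤ altSum (L.map (fun x => x ^ 3)) ∧
    (2 ≤ L.length → (altSum L) ^ 3 < altSum (L.map (fun x => x ^ 3)))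
  | [] => by intro _ _; simp [altSum]
  | [a] => by intro _ _; simp [altSum]
  | a :: b :: L => by
    intro hp hpos
    have hpL : L.Pairwise (· > ·) := (hp.of_cons).of_cons
    have hposL : ∀ x ∈ L, 0 < x := fun x hx =>
      hpos x (List.mem_cons_of_mem a (List.mem_cons_of_mem b hx))
    have hb : 0 < b := hpos b (List.mem_cons_of_mem a (List.mem_cons_self))
    have hab : b < a := (List.pairwise_cons.mp hp).1 b (List.mem_cons_self)
    have hltb : ∀ x ∈ L, x < b := fun x hx =>
      (List.pairwise_cons.mp hp.of_cons).1 x hx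
    obtain ⟨hQ, _⟩ := altSum_cube L hpL hposL
    obtain ⟨h0, hub⟩ := altSum_bounds L hpL hposL
    have htb : altSum L < b := hub b hb hltb
    have key : (a - b + altSum L) ^ 3 < a ^ 3 - b ^ 3 + (altSum L) ^ 3 :=
      cube_ineq hab htb h0
    have hsum : altSum (a :: b :: L) = a - b + altSum L := by
      show a - (b - altSum L) = _; ring
    have hcube : altSum ((a :: b :: L).map (fun x => x ^ 3)) =
        a ^ 3 - b ^ 3 + altSum (L.map (fun x => x ^ 3)) := by
      show a ^ 3 - (b ^ 3 - altSum (L.map (fun x => x ^ 3))) = _; ring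
    rw [hsum, hcube]
    constructor
    · linarith
    · intro _; linarith

lemma esymm_nil (k : ℕ) : Multiset.esymm (0 : Multiset ℝ) (k + 1) = 0 := by
  simp [Multiset.esymm, Multiset.powersetCard_zero_right]

lemma esymm_zero' (s : Multiset ℝ) : s.esymm 0 = 1 := by
  simp [Multiset.esymm]

lemma esymm_one' (s : Multiset ℝ) : s.esymm 1 = s.sum := by
  simp [Multiset.esymm, Multiset.powersetCard_one, Multiset.map_map, Function.comp_def]

lemma esymm_cons (a : ℝ) (s : Multiset ℝ) (k : ℕ) :
    (a ::ₘ s).esymm (k + 1) = s.esymm (k + 1) + a * s.esymm k := by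
  simp only [Multiset.esymm, Multiset.powersetCard_cons, Multiset.map_add, Multiset.sum_add,
    Multiset.map_map, Function.comp_def, Multiset.prod_cons]
  congr 1
  rw [← Multiset.sum_map_mul_left]

/-- Newton-type identity: `3σ₃ - 3σ₁σ₂ = p₃ - σ₁³`. -/
lemma esymm_identity (s : Multiset ℝ) :
    3 * s.esymm 3 - 3 * s.esymm 1 * s.esymm 2 = (s.map (fun x => x ^ 3)).sum - s.sum ^ 3 := by
  induction s using Multiset.induction with
  | empty => simp [esymm_nil]
  | cons a s ih =>
    have h3 := esymm_cons a s 2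
    have h2 := esymm_cons a s 1
    have h1 := esymm_cons a s 0
    norm_num at h3 h2 h1
    rw [h3, h2, h1, esymm_zero', Multiset.map_cons, Multiset.sum_cons, Multiset.sum_cons]
    rw [esymm_one'] at ih ⊢
    linear_combination ih

/-- `Λ = (λ₁, ..., λₙ)` (0-indexed) has alternating signs and strictly
decreasing absolute values: `λ₁ > -λ₂ > λ₃ > ⋯ > (-1)^(n-1) λₙ > 0`. -/
def AltCond (n : ℕ) (l : Fin n → ℝ) : Prop :=
  (∀ i : Fin n, 0 < (-1 : ℝ) ^ (i : ℕ) * l i) ∧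
  StrictAnti (fun i : Fin n => (-1 : ℝ) ^ (i : ℕ) * l i)

theorem stmt_1 (n : ℕ) (hn : 3 ≤ n) (l : Fin n → ℝ) (hl : AltCond n l) :
    Multiset.esymm (Multiset.map l Finset.univ.val) 1 *
      Multiset.esymm (Multiset.map l Finset.univ.val) 2 <
    Multiset.esymm (Multiset.map l Finset.univ.val) 3 := by
  obtain ⟨hpos, hanti⟩ := hl
  set s := Multiset.map l Finset.univ.val with hs
  set L : List ℝ := List.ofFn (fun i : Fin n => (-1 : ℝ) ^ (i : ℕ) * l i) with hL
  have hpair : L.Pairwise (· > ·) := by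
    rw [hL, List.pairwise_ofFn]
    intro i j hij
    exact hanti hij
  have hposL : ∀ x ∈ L, 0 < x := by
    intro x hx
    rw [hL, List.mem_ofFn] at hx
    obtain ⟨i, rfl⟩ := hx
    exact hpos i
  have hlen : 2 ≤ L.length := by
    rw [hL, List.length_ofFn]; omega
  have hsum : altSum L = s.sum := by
    rw [hL, altSum_ofFn, hs]
    show _ = Finset.sum Finset.univ l
    exact Finset.sum_congr rfl (fun i _ => by
      rw [← mul_assoc, ← pow_add]
      rw [Even.neg_one_pow ⟨(i : ℕ), rfl⟩, one_mul])
  have hcube : altSum (L.map (fun x => x ^ 3)) = (s.map (fun x => x ^ 3)).sum := by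
    rw [hL, List.map_ofFn, altSum_ofFn, hs, Multiset.map_map]
    show _ = Finset.sum Finset.univ (fun i => l i ^ 3)
    exact Finset.sum_congr rfl (fun i _ => by
      show (-1 : ℝ) ^ (i : ℕ) * ((-1 : ℝ) ^ (i : ℕ) * l i) ^ 3 = l i ^ 3
      rw [mul_pow, ← pow_mul, ← mul_assoc, ← pow_add]
      rw [Even.neg_one_pow ⟨2 * (i : ℕ), by ring⟩, one_mul])
  obtain ⟨_, hstrict⟩ := altSum_cube L hpair hposL
  have hkey := hstrict hlen
  have hid := esymm_identity s
  rw [hsum, hcube] at hkey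
  linarith
end

section
/- Let n ≥ 3 and λ₁, ..., λₙ be real numbers with λ₁ > -λ₂ > λ₃ > ... > (-1)^{n-1} λₙ > 0. Then σ₁(Λ) > 0, σ₂(Λ) < 0, and σ₃(Λ)/σ₁(Λ) - σ₂(Λ) > 0. -/
lemma esymm_map_neg (t : Multiset ℝ) (k : ℕ) :
    (t.map (fun x => -x)).esymm k = (-1) ^ k * t.esymm k := by
  have := Multiset.pow_smul_esymm (-1 : ℝ) k t
  simpa [smul_eq_mul] using this.symm

lemma univ_succ_decomp (n : ℕ) (l : Fin (n + 1) → ℝ) :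
    Multiset.map l Finset.univ.val
      = l 0 ::ₘ Multiset.map (fun i : Fin n => l i.succ) Finset.univ.val := by
  rw [Fin.univ_succ, Finset.cons_val, Multiset.map_cons, Finset.map_val, Multiset.map_map]
  rfl

lemma esymm_empty (k : ℕ) : (0 : Multiset ℝ).esymm (k + 1) = 0 := by
  simp [Multiset.esymm, Multiset.powersetCard_zero_right]

lemma altCond_tail (n : ℕ) (l : Fin (n + 1) → ℝ) (hl : AltCond (n + 1) l) :
    AltCond n (fun i : Fin n => -(l i.succ)) := by
  constructor
  · intro i
    have h := hl.1 i.succ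
    rw [Fin.val_succ] at h
    rw [show (-1 : ℝ) ^ (i : ℕ) * -(l i.succ) = (-1 : ℝ) ^ ((i : ℕ) + 1) * l i.succ by ring]
    exact h
  · intro i j hij
    have h := hl.2 (Fin.succ_lt_succ_iff.mpr hij)
    simp only [Fin.val_succ] at h
    show (-1 : ℝ) ^ (j : ℕ) * -(l j.succ) < (-1 : ℝ) ^ (i : ℕ) * -(l i.succ)
    calc (-1 : ℝ) ^ (j : ℕ) * -(l j.succ) = (-1 : ℝ) ^ ((j : ℕ) + 1) * l j.succ := by ring
    _ < (-1 : ℝ) ^ ((i : ℕ) + 1) * l i.succ := h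
    _ = (-1 : ℝ) ^ (i : ℕ) * -(l i.succ) := by ring

lemma esymm_decomp (n : ℕ) (l : Fin (n + 1) → ℝ) :
    (Multiset.map l Finset.univ.val).esymm 1
        = l 0 - (Multiset.map (fun i : Fin n => -(l i.succ)) Finset.univ.val).esymm 1 ∧
    (Multiset.map l Finset.univ.val).esymm 2
        = (Multiset.map (fun i : Fin n => -(l i.succ)) Finset.univ.val).esymm 2
          - l 0 * (Multiset.map (fun i : Fin n => -(l i.succ)) Finset.univ.val).esymm 1 ∧
    (Multiset.map l Finset.univ.val).esymm 3
        = -(Multiset.map (fun i : Fin n => -(l i.succ)) Finset.univ.val).esymm 3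
          + l 0 * (Multiset.map (fun i : Fin n => -(l i.succ)) Finset.univ.val).esymm 2 := by
  set t : Multiset ℝ := Multiset.map (fun i : Fin n => -(l i.succ)) Finset.univ.val with ht
  have hmap : Multiset.map (fun i : Fin n => l i.succ) Finset.univ.val
      = t.map (fun x => -x) := by
    rw [ht, Multiset.map_map]; simp [Function.comp_def]
  have hdec := univ_succ_decomp n l
  rw [hdec, hmap]
  have c1 := esymm_cons (l 0) (t.map (fun x => -x)) 0
  have c2 := esymm_cons (l 0) (t.map (fun x => -x)) 1
  have c3 := esymm_cons (l 0) (t.map (fun x => -x)) 2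
  norm_num at c1 c2 c3
  rw [c1, c2, c3]
  simp only [esymm_map_neg, esymm_zero']
  refine ⟨by ring, by ring, by ring⟩

lemma key : ∀ (n : ℕ) (l : Fin (n + 1) → ℝ), AltCond (n + 1) l →
    0 < (Multiset.map l Finset.univ.val).esymm 1 ∧
    (Multiset.map l Finset.univ.val).esymm 1 ≤ l 0 ∧
    (Multiset.map l Finset.univ.val).esymm 2 ≤ 0 ∧
    0 ≤ (Multiset.map l Finset.univ.val).esymm 3
        - (Multiset.map l Finset.univ.val).esymm 1 * (Multiset.map l Finset.univ.val).esymm 2 ∧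
    (Multiset.map l Finset.univ.val).esymm 3
        - (Multiset.map l Finset.univ.val).esymm 1 * (Multiset.map l Finset.univ.val).esymm 2
      ≤ l 0 * (Multiset.map l Finset.univ.val).esymm 1
          * (l 0 - (Multiset.map l Finset.univ.val).esymm 1) := by
  intro n
  induction n with
  | zero =>
    intro l hl
    have hpos : 0 < l 0 := by simpa using hl.1 0
    have hdec := univ_succ_decomp 0 l
    have h0 : Multiset.map (fun i : Fin 0 => l i.succ) Finset.univ.val = 0 := by simp
    rw [h0] at hdec
    have c1 := esymm_cons (l 0) 0 0
    have c2 := esymm_cons (l 0) 0 1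
    have c3 := esymm_cons (l 0) 0 2
    norm_num [esymm_empty, esymm_zero'] at c1 c2 c3
    rw [hdec]
    simp only [Multiset.cons_zero]
    rw [c1, c2, c3]
    norm_num [hpos]
  | succ n ih =>
    intro l hl
    set l' : Fin (n + 1) → ℝ := fun i => -(l i.succ) with hl'
    have htail : AltCond (n + 1) l' := altCond_tail (n + 1) l hl
    obtain ⟨h1, h2, h3, h4, h5⟩ := ih l' htail
    obtain ⟨d1, d2, d3⟩ := esymm_decomp (n + 1) l
    set e1 := (Multiset.map l' Finset.univ.val).esymm 1
    set e2 := (Multiset.map l' Finset.univ.val).esymm 2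
    set e3 := (Multiset.map l' Finset.univ.val).esymm 3
    set a := l 0 with ha
    have hb : l' 0 = -(l 1) := by
      rw [hl']; norm_num [Fin.succ_zero_eq_one]
    have hba : l' 0 < a := by
      have h := hl.2 (show (0 : Fin (n + 2)) < 1 by rw [Fin.lt_def]; norm_num)
      simp only [Fin.val_zero, Fin.val_one, pow_zero, pow_one, one_mul] at h
      rw [hb]; linarith
    have hbpos : 0 < l' 0 := by simpa using htail.1 0
    have hapos : 0 < a := by linarith
    have hint2 : 0 ≤ e1 * (a - l' 0) * (a + l' 0 - e1) := by
      apply mul_nonneg (mul_nonneg h1.le (by linarith)) (by linarith)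
    rw [d1, d2, d3]
    refine ⟨by linarith, by linarith, ?_, ?_, ?_⟩
    · nlinarith [mul_pos hapos h1]
    · nlinarith [h5, hint2]
    · nlinarith [h4]

theorem stmt_2 (n : ℕ) (hn : 3 ≤ n) (l : Fin n → ℝ) (hl : AltCond n l) :
    0 < Multiset.esymm (Multiset.map l Finset.univ.val) 1 ∧
    Multiset.esymm (Multiset.map l Finset.univ.val) 2 < 0 ∧
    0 < Multiset.esymm (Multiset.map l Finset.univ.val) 3 /
          Multiset.esymm (Multiset.map l Finset.univ.val) 1 -
        Multiset.esymm (Multiset.map l Finset.univ.val) 2 := by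
  obtain ⟨m, rfl⟩ : ∃ m, n = m + 3 := ⟨n - 3, by omega⟩
  set l' : Fin (m + 2) → ℝ := fun i => -(l i.succ) with hl'
  have htail : AltCond (m + 2) l' := altCond_tail (m + 2) l hl
  obtain ⟨h1, h2, h3, h4, h5⟩ := key (m + 1) l' htail
  obtain ⟨d1, d2, d3⟩ := esymm_decomp (m + 2) l
  set e1 := (Multiset.map l' Finset.univ.val).esymm 1
  set e2 := (Multiset.map l' Finset.univ.val).esymm 2
  set e3 := (Multiset.map l' Finset.univ.val).esymm 3
  set a := l 0 with ha
  have hb : l' 0 = -(l 1) := by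
    rw [hl']; norm_num [Fin.succ_zero_eq_one]
  have hba : l' 0 < a := by
    have h := hl.2 (show (0 : Fin (m + 3)) < 1 by rw [Fin.lt_def]; norm_num)
    simp only [Fin.val_zero, Fin.val_one, pow_zero, pow_one, one_mul] at h
    rw [hb]; linarith
  have hbpos : 0 < l' 0 := by simpa using htail.1 0
  have hapos : 0 < a := by linarith
  rw [d1, d2, d3]
  have hE1 : 0 < a - e1 := by linarith
  refine ⟨hE1, by nlinarith [mul_pos hapos h1], ?_⟩
  have hint : 0 < e1 * (a - l' 0) * (a + l' 0 - e1) := by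
    apply mul_pos (mul_pos h1 (by linarith)) (by linarith)
  have hnum : 0 < (-e3 + a * e2) - (a - e1) * (e2 - a * e1) := by
    nlinarith [h5, hint]
  rw [div_sub' (ne_of_gt hE1)]
  exact div_pos (by linarith) hE1
end

section
/- Let B_n be the n×n Jacobi matrix with diagonal (a₁, 0, 0, ..., 0) and off-diagonal entries (a₂, a₃, ..., aₙ). Then its characteristic polynomials q_n(λ) = det(λI − B_n) satisfy q_n(λ) = λ q_{n−1}(λ) − a_n² q_{n−2}(λ) for the expansion by the last row, with q₀ = 1, q₁ = λ − a₁; consequently B_n has the same characteristic polynomial as the symmetric anti-bidiagonal matrix A_n built from the same parameters a₁, ..., aₙ. -/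
open Polynomial

/-- The `n × n` symmetric anti-bidiagonal matrix built from the parameters
`a 1, ..., a n`. -/
def antiBidiag (n : ℕ) (a : ℕ → ℝ) : Matrix (Fin n) (Fin n) ℝ :=
  Matrix.of fun i j =>
    if (i : ℕ) + j + 1 = n then a (n - 2 * min (i : ℕ) j)
    else if (i : ℕ) + j = n then a (n + 1 - 2 * min (i : ℕ) j)
    else 0

/-- The `n × n` symmetric tridiagonal (Jacobi-type) matrix with diagonal
`(a 1, 0, ..., 0)` and off-diagonal entries `a 2, ..., a n`. -/
def jacobiB (n : ℕ) (a : ℕ → ℝ) : Matrix (Fin n) (Fin n) ℝ :=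
  Matrix.of fun i j =>
    if (i : ℕ) = j then (if (i : ℕ) = 0 then a 1 else 0)
    else if (i : ℕ) + 1 = j ∨ (j : ℕ) + 1 = i then a (max (i : ℕ) j + 1)
    else 0

lemma charm_jac_apply (a : ℕ → ℝ) (m : ℕ) (p q : Fin m) :
    Matrix.charmatrix (jacobiB m a) p q =
      if (p : ℕ) = q then X - C (if (p : ℕ) = 0 then a 1 else 0)
      else if (p : ℕ) + 1 = q ∨ (q : ℕ) + 1 = p then -C (a (max (p : ℕ) q + 1))
      else 0 := by
  by_cases h : (p : ℕ) = q
  · have : p = q := Fin.ext h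
    subst this
    rw [Matrix.charmatrix_apply_eq, if_pos rfl]
    congr 1
    simp [jacobiB]
  · rw [Matrix.charmatrix_apply_ne _ _ _ (fun hc => h (by rw [hc])), if_neg h]
    by_cases h2 : (p : ℕ) + 1 = q ∨ (q : ℕ) + 1 = p
    · rw [if_pos h2]
      congr 1
      simp [jacobiB, if_neg h, if_pos h2]
    · rw [if_neg h2]
      simp [jacobiB, if_neg h, if_neg h2]

lemma jac_charpoly_zero (a : ℕ → ℝ) : (jacobiB 0 a).charpoly = 1 := by
  simp [Matrix.charpoly, Matrix.det_isEmpty]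

lemma jac_charpoly_one (a : ℕ → ℝ) : (jacobiB 1 a).charpoly = X - C (a 1) := by
  rw [Matrix.charpoly, Matrix.det_fin_one, charm_jac_apply]
  norm_num

lemma jac_rec (a : ℕ → ℝ) (n : ℕ) :
    (jacobiB (n + 2) a).charpoly =
      X * (jacobiB (n + 1) a).charpoly - C (a (n + 2)) ^ 2 * (jacobiB n a).charpoly := by
  classical
  set M := Matrix.charmatrix (jacobiB (n + 2) a) with hM
  have hMapply : ∀ p q : Fin (n + 2), M p q =
      (if (p : ℕ) = q then X - C (if (p : ℕ) = 0 then a 1 else 0)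
      else if (p : ℕ) + 1 = q ∨ (q : ℕ) + 1 = p then -C (a (max (p : ℕ) q + 1))
      else 0) := charm_jac_apply a (n + 2)
  set j1 : Fin (n + 2) := ⟨n, by omega⟩ with hj1
  set j2 : Fin (n + 2) := Fin.last (n + 1) with hj2
  have hne : j1 ≠ j2 := by
    simp only [hj1, hj2, Ne, Fin.ext_iff, Fin.val_last]
    omega
  set f : Fin (n + 2) → ℝ[X] := fun j =>
    (-1) ^ ((Fin.last (n + 1) : ℕ) + (j : ℕ)) * M (Fin.last (n + 1)) j *
      (M.submatrix (Fin.last (n + 1)).succAbove j.succAbove).det with hf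
  have hdet : (jacobiB (n + 2) a).charpoly = ∑ j : Fin (n + 2), f j :=
    Matrix.det_succ_row M (Fin.last (n + 1))
  have hzero : ∀ j : Fin (n + 2), j ≠ j1 → j ≠ j2 → f j = 0 := by
    intro j h1 h2
    have hv : (j : ℕ) < n + 2 := j.isLt
    have h1' : (j : ℕ) ≠ n := fun hc => h1 (Fin.ext hc)
    have h2' : (j : ℕ) ≠ n + 1 := fun hc => h2 (Fin.ext (by simpa [hj2] using hc))
    have : M (Fin.last (n + 1)) j = 0 := by
      rw [hMapply]
      rw [if_neg (by simp only [Fin.val_last]; omega),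
        if_neg (by simp only [Fin.val_last]; omega)]
    simp [hf, this]
  have hsum : ∑ j : Fin (n + 2), f j = f j1 + f j2 := by
    rw [← Finset.sum_pair hne]
    refine (Finset.sum_subset (Finset.subset_univ _) ?_).symm
    intro x _ hx
    simp only [Finset.mem_insert, Finset.mem_singleton] at hx
    push_neg at hx
    exact hzero x hx.1 hx.2
  -- the minor at (last, last)
  have hminor2 : M.submatrix (Fin.last (n + 1)).succAbove j2.succAbove =
      Matrix.charmatrix (jacobiB (n + 1) a) := by
    ext i j
    rw [Matrix.submatrix_apply, hj2, Fin.succAbove_last, hMapply, charm_jac_apply]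
    simp only [Fin.coe_castSucc]
  have hfj2 : f j2 = X * (jacobiB (n + 1) a).charpoly := by
    have hsign : ((-1 : ℝ[X])) ^ ((Fin.last (n + 1) : ℕ) + ((j2 : Fin (n + 2)) : ℕ)) = 1 := by
      simp only [hj2, Fin.val_last]
      exact Even.neg_one_pow ⟨n + 1, by ring⟩
    have hentry : M (Fin.last (n + 1)) j2 = X := by
      rw [hMapply]
      rw [if_pos (by simp [hj2])]
      rw [if_neg (by simp [Fin.val_last])]
      simp
    rw [hf]
    simp only [hsign, hentry, one_mul, hminor2]
    rfl
  -- the minor at (last, j1)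
  set N := M.submatrix (Fin.last (n + 1)).succAbove j1.succAbove with hN
  have hNdet : N.det = -C (a (n + 2)) * (jacobiB n a).charpoly := by
    have hcol : ∀ i : Fin (n + 1), i ≠ Fin.last n →
        N i (Fin.last n) = 0 := by
      intro i hi
      have hi' : (i : ℕ) ≠ n := fun hc => hi (Fin.ext (by simpa using hc))
      have hiv : (i : ℕ) < n + 1 := i.isLt
      have hsA : ((Fin.last (n + 1)).succAbove i : ℕ) = (i : ℕ) := by
        rw [Fin.succAbove_last]; simp
      have hsB : ((j1.succAbove (Fin.last n) : Fin (n + 2)) : ℕ) = n + 1 := by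
        rw [Fin.succAbove]
        rw [if_neg (by simp [hj1, Fin.lt_iff_val_lt_val])]
        simp
      rw [hN, Matrix.submatrix_apply, hMapply, if_neg (by omega), if_neg (by omega)]
    have hexp := Matrix.det_succ_column N (Fin.last n)
    have hsum2 : N.det = (-1) ^ ((Fin.last n : ℕ) + (Fin.last n : ℕ)) * N (Fin.last n) (Fin.last n)
        * (N.submatrix (Fin.last n).succAbove (Fin.last n).succAbove).det := by
      rw [hexp, Finset.sum_eq_single (Fin.last n)]
      · intro b _ hb
        rw [hcol b hb]
        ring
      · intro h; exact absurd (Finset.mem_univ _) h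
    have hsign : ((-1 : ℝ[X])) ^ ((Fin.last n : ℕ) + (Fin.last n : ℕ)) = 1 :=
      Even.neg_one_pow ⟨n, by simp⟩
    have hentry : N (Fin.last n) (Fin.last n) = -C (a (n + 2)) := by
      have hsA : ((Fin.last (n + 1)).succAbove (Fin.last n) : ℕ) = n := by
        rw [Fin.succAbove_last]; simp
      have hsB : ((j1.succAbove (Fin.last n) : Fin (n + 2)) : ℕ) = n + 1 := by
        rw [Fin.succAbove]
        rw [if_neg (by simp [hj1, Fin.lt_iff_val_lt_val])]
        simp
      rw [hN, Matrix.submatrix_apply, hMapply, hsA, hsB]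
      rw [if_neg (by omega), if_pos (by omega)]
      have hmx : max n (n + 1) + 1 = n + 2 := by omega
      rw [hmx]
    have hminor : N.submatrix (Fin.last n).succAbove (Fin.last n).succAbove =
        Matrix.charmatrix (jacobiB n a) := by
      ext i j
      have hsA : ((Fin.last (n + 1)).succAbove ((Fin.last n).succAbove i) : ℕ) = (i : ℕ) := by
        rw [Fin.succAbove_last, Fin.succAbove_last]; simp
      have hjv := j.isLt
      have hjv' : (j.castSucc.castSucc : Fin (n + 2)) < j1 := by
        rw [Fin.lt_def]
        exact hjv
      have hsB : ((j1.succAbove ((Fin.last n).succAbove j) : Fin (n + 2)) : ℕ) = (j : ℕ) := by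
        rw [Fin.succAbove_last, Fin.succAbove, if_pos hjv']
        simp
      rw [Matrix.submatrix_apply, hN, Matrix.submatrix_apply, hMapply, charm_jac_apply,
        hsA, hsB]
    rw [hsum2, hsign, hentry, hminor, one_mul]
    rfl
  have hfj1 : f j1 = -(C (a (n + 2)) ^ 2 * (jacobiB n a).charpoly) := by
    have hsign : ((-1 : ℝ[X])) ^ ((Fin.last (n + 1) : ℕ) + ((j1 : Fin (n + 2)) : ℕ)) = -1 := by
      simp only [hj1, Fin.val_last]
      exact Odd.neg_one_pow ⟨n, by ring⟩
    have hentry : M (Fin.last (n + 1)) j1 = -C (a (n + 2)) := by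
      have h1 : (Fin.last (n + 1) : ℕ) = n + 1 := rfl
      have h2 : (j1 : ℕ) = n := rfl
      rw [hMapply, h1, h2]
      rw [if_neg (by omega), if_pos (by omega)]
      have hmx : max (n + 1) n + 1 = n + 2 := by omega
      rw [hmx]
    rw [hf]
    simp only [hsign, hentry, ← hN, hNdet]
    ring
  rw [hdet, hsum, hfj1, hfj2]
  ring

theorem stmt_5 (a : ℕ → ℝ) :
    (jacobiB 0 a).charpoly = 1 ∧
    (jacobiB 1 a).charpoly = X - C (a 1) ∧
    (∀ n : ℕ, 2 ≤ n →
      (jacobiB n a).charpoly =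
        X * (jacobiB (n - 1) a).charpoly -
          C (a n) ^ 2 * (jacobiB (n - 2) a).charpoly) ∧
    ∀ n : ℕ, (jacobiB n a).charpoly = (antiBidiag n a).charpoly := by
  refine ⟨jac_charpoly_zero a, jac_charpoly_one a, ?_, ?_⟩
  · intro n hn
    obtain ⟨m, rfl⟩ : ∃ m, n = m + 2 := ⟨n - 2, by omega⟩
    have h1 : m + 2 - 1 = m + 1 := by omega
    have h2 : m + 2 - 2 = m := by omega
    rw [h1, h2]
    exact jac_rec a m
  · intro n
    set τ : Fin n → Fin n := fun v =>
      ⟨if n ≤ 2 * (v : ℕ) then 2 * (v : ℕ) - n else n - 1 - 2 * (v : ℕ), by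
        have := v.isLt; split_ifs <;> omega⟩ with hτ
    have hval : ∀ v : Fin n, (τ v : ℕ) =
        if n ≤ 2 * (v : ℕ) then 2 * (v : ℕ) - n else n - 1 - 2 * (v : ℕ) := fun v => rfl
    have hinj : Function.Injective τ := by
      intro v w h
      have hv := v.isLt
      have hw := w.isLt
      have h' : (τ v : ℕ) = (τ w : ℕ) := congrArg Fin.val h
      rw [hval, hval] at h'
      apply Fin.ext
      split_ifs at h' <;> omega
    have key : ∀ v w : Fin n, antiBidiag n a v w = jacobiB n a (τ v) (τ w) := by
      intro v w
      have hv := v.isLt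
      have hw := w.isLt
      simp only [antiBidiag, jacobiB, Matrix.of_apply, hval]
      split_ifs <;> first | rfl | omega | (congr 1; omega)
    have hbij : Function.Bijective τ := (Finite.injective_iff_bijective).mp hinj
    set e : Fin n ≃ Fin n := Equiv.ofBijective τ hbij with he
    have heq : antiBidiag n a = (jacobiB n a).submatrix e e := by
      ext v w
      exact key v w
    rw [heq]
    have : (jacobiB n a).submatrix e e =
        Matrix.reindex e.symm e.symm (jacobiB n a) := by
      ext v w
      simp [Matrix.reindex_apply]
    rw [this, Matrix.charpoly_reindex]
end

section
/- Let p and q be monic real polynomials of degrees n and n−1 respectively, both with all roots real and simple, such that the roots of q interlace the roots of p, and suppose r is defined by p(λ) = (λ − c) q(λ) − b² r(λ) with b ≠ 0 and r monic of degree n−2. Then the values of r at consecutive zeros of q alternate in sign, and hence r has n−2 real roots interlacing the roots of q. -/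
open Polynomial Set

/-! Evaluating `p = (X - c) q - b² r` at a root `μᵢ` of `q` gives `p(μᵢ) = -b² r(μᵢ)`, so `r`
alternates in sign on the roots of `q` exactly when `p` does. And `p(μᵢ) p(μᵢ₊₁)` is negative:
in `∏ⱼ (μᵢ - ρⱼ)(μᵢ₊₁ - ρⱼ)` only the factor of the single root `ρᵢ₊₁` lying between `μᵢ` and
`μᵢ₊₁` is negative. The intermediate value theorem then places a root of `r` in each gap. -/

lemma exists_mem_Ioo_eq_zero_of_mul_neg {f : ℝ → ℝ} (hf : Continuous f) {a b : ℝ} (hab : a < b)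
    (h : f a * f b < 0) : ∃ x ∈ Ioo a b, f x = 0 := by
  rcases mul_neg_iff.mp h with ⟨ha, hb⟩ | ⟨ha, hb⟩
  · exact intermediate_value_Ioo' hab.le hf.continuousOn ⟨hb, ha⟩
  · exact intermediate_value_Ioo hab.le hf.continuousOn ⟨ha, hb⟩

lemma exists_strictMono_zeros_of_mul_neg {f : ℝ → ℝ} (hf : Continuous f) {m : ℕ}
    {x : Fin (m + 1) → ℝ} (hx : StrictMono x)
    (h : ∀ i : Fin m, f (x i.castSucc) * f (x i.succ) < 0) :
    ∃ ν : Fin m → ℝ, StrictMono ν ∧ (∀ i, f (ν i) = 0) ∧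
      ∀ i, x i.castSucc < ν i ∧ ν i < x i.succ := by
  have hgap (i : Fin m) : ∃ y ∈ Ioo (x i.castSucc) (x i.succ), f y = 0 :=
    exists_mem_Ioo_eq_zero_of_mul_neg hf (hx Fin.castSucc_lt_succ) (h i)
  choose ν hν hν0 using hgap
  refine ⟨ν, fun i j hij ↦ ?_, hν0, hν⟩
  calc ν i < x i.succ := (hν i).2
    _ ≤ x j.castSucc := hx.monotone (Fin.succ_le_castSucc_iff.mpr hij)
    _ < ν j := (hν j).1

lemma prod_sub_mul_prod_sub_neg {ι : Type*} [Fintype ι] [DecidableEq ι] (a : ι → ℝ)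
    {x y : ℝ} {k : ι} (hk : a k ∈ Ioo x y) (hj : ∀ j ≠ k, a j ∉ Icc x y) :
    (∏ j, (x - a j)) * ∏ j, (y - a j) < 0 := by
  rw [← Finset.prod_mul_distrib, ← Finset.mul_prod_erase _ _ (Finset.mem_univ k)]
  refine mul_neg_of_neg_of_pos (mul_neg_of_neg_of_pos (by linarith [hk.1]) (by linarith [hk.2]))
    (Finset.prod_pos fun j hj' ↦ ?_)
  rcases not_and_or.mp (hj j (Finset.ne_of_mem_erase hj')) with h | h <;> push Not at h
  · exact mul_pos (by linarith) (by linarith [hk.1.trans hk.2])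
  · exact mul_pos_of_neg_of_neg (by linarith [hk.1.trans hk.2]) (by linarith)

def Interlaces {n : ℕ} (ρ : Fin n → ℝ) (μ : Fin (n - 1) → ℝ) : Prop :=
  ∀ i : Fin (n - 1), ρ ⟨i, by omega⟩ < μ i ∧ μ i < ρ ⟨i + 1, by omega⟩

namespace Interlaces

variable {n : ℕ} {ρ : Fin n → ℝ} {μ : Fin (n - 1) → ℝ}

lemma lt_of_le (hint : Interlaces ρ μ) (hρ : StrictMono ρ) {j : Fin n} {k : Fin (n - 1)}
    (hjk : (j : ℕ) ≤ k) : ρ j < μ k :=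
  (hρ.monotone (Fin.mk_le_mk.mpr hjk : j ≤ ⟨k, by omega⟩)).trans_lt (hint k).1

lemma lt_of_lt (hint : Interlaces ρ μ) (hρ : StrictMono ρ) {j : Fin n} {k : Fin (n - 1)}
    (hkj : (k : ℕ) < j) : μ k < ρ j :=
  (hint k).2.trans_le (hρ.monotone (Fin.mk_le_mk.mpr hkj : (⟨k + 1, by omega⟩ : Fin n) ≤ j))

lemma prod_sub_mul_prod_sub_neg (hint : Interlaces ρ μ) (hρ : StrictMono ρ)
    {i k : Fin (n - 1)} (hik : (k : ℕ) = i + 1) :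
    (∏ j, (μ i - ρ j)) * ∏ j, (μ k - ρ j) < 0 := by
  refine _root_.prod_sub_mul_prod_sub_neg ρ (k := ⟨i + 1, by omega⟩) ⟨(hint i).2, ?_⟩
    fun j hj ↦ ?_
  · exact hint.lt_of_le hρ hik.ge
  · rcases lt_or_gt_of_ne (Fin.val_ne_of_ne hj) with h | h
    · exact fun hmem ↦ (hint.lt_of_le hρ (Nat.le_of_lt_succ h)).not_ge hmem.1
    · exact fun hmem ↦ (hint.lt_of_lt hρ (hik ▸ h)).not_ge hmem.2

end Interlaces

lemma eval_eq_neg_mul_of_isRoot {R : Type*} [CommRing R] {p q r : R[X]} {c b x : R}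
    (hr : p = (X - C c) * q - C (b ^ 2) * r) (hx : q.IsRoot x) :
    p.eval x = -(b ^ 2 * r.eval x) := by
  simp [hr, hx.eq_zero]

theorem stmt_7 (n : ℕ) (hn : 2 ≤ n)
    (ρ : Fin n → ℝ) (hρ : StrictMono ρ)
    (μ : Fin (n - 1) → ℝ) (hμ : StrictMono μ)
    (p q r : ℝ[X])
    (hp : p = ∏ i, (X - C (ρ i)))
    (hq : q = ∏ i, (X - C (μ i)))
    (hint : ∀ i : Fin (n - 1),
      ρ (Fin.cast (by omega) i.castSucc) < μ i ∧
      μ i < ρ (Fin.cast (by omega) i.succ))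
    (c b : ℝ) (hb : b ≠ 0)
    (hr : p = (X - C c) * q - C (b ^ 2) * r) :
    (∀ i : Fin (n - 2),
      r.eval (μ (Fin.cast (by omega) i.castSucc)) *
        r.eval (μ (Fin.cast (by omega) i.succ)) < 0) ∧
    ∃ ν : Fin (n - 2) → ℝ, StrictMono ν ∧ (∀ i, r.IsRoot (ν i)) ∧
      ∀ i : Fin (n - 2),
        μ (Fin.cast (by omega) i.castSucc) < ν i ∧
        ν i < μ (Fin.cast (by omega) i.succ) := by
  have hpr (k : Fin (n - 1)) : ∏ j, (μ k - ρ j) = -(b ^ 2 * r.eval (μ k)) := by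
    have hqk : q.IsRoot (μ k) := by
      rw [hq, IsRoot, eval_prod]
      exact Finset.prod_eq_zero (Finset.mem_univ k) (by simp)
    simpa [hp, eval_prod] using eval_eq_neg_mul_of_isRoot hr hqk
  have hcast : n - 2 + 1 = n - 1 := by omega
  have hsign (i : Fin (n - 2)) :
      r.eval ((μ ∘ Fin.cast hcast) i.castSucc) * r.eval ((μ ∘ Fin.cast hcast) i.succ) < 0 := by
    have h := Interlaces.prod_sub_mul_prod_sub_neg (k := Fin.cast hcast i.succ)
      (i := Fin.cast hcast i.castSucc) hint hρ rfl
    rw [hpr, hpr, neg_mul_neg, mul_mul_mul_comm] at h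
    exact neg_of_mul_neg_right h (by positivity)
  obtain ⟨ν, hνmono, hνroot, hν⟩ :=
    exists_strictMono_zeros_of_mul_neg r.continuous (hμ.comp fun _ _ h ↦ h) hsign
  exact ⟨hsign, ν, hνmono, hνroot, hν⟩
end

section
/- If A is an n×n real symmetric anti-bidiagonal matrix with positive entries a₁, ..., aₙ, then A² is a symmetric positive definite tridiagonal matrix with positive off-diagonal entries (a Jacobi matrix). -/
open Matrix


namespace ABaux

variable {n : ℕ} {a : ℕ → ℝ}

lemma entry_zero (i j : Fin n) (h1 : (i : ℕ) + j + 1 ≠ n) (h2 : (i : ℕ) + j ≠ n) :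
    antiBidiag n a i j = 0 := by
  simp [antiBidiag, h1, h2]

lemma entry_pos1 (ha : ∀ i, 1 ≤ i → i ≤ n → 0 < a i) (i j : Fin n)
    (h : (i : ℕ) + j + 1 = n) : 0 < antiBidiag n a i j := by
  have hi := i.isLt; have hj := j.isLt
  simp only [antiBidiag, Matrix.of_apply, if_pos h]
  rcases le_total (i : ℕ) (j : ℕ) with hm | hm <;>
    [rw [min_eq_left hm]; rw [min_eq_right hm]] <;> exact ha _ (by omega) (by omega)

lemma entry_pos2 (ha : ∀ i, 1 ≤ i → i ≤ n → 0 < a i) (i j : Fin n)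
    (h : (i : ℕ) + j = n) : 0 < antiBidiag n a i j := by
  have hi := i.isLt; have hj := j.isLt
  simp only [antiBidiag, Matrix.of_apply]
  rw [if_neg (by omega), if_pos h]
  rcases le_total (i : ℕ) (j : ℕ) with hm | hm <;>
    [rw [min_eq_left hm]; rw [min_eq_right hm]] <;> exact ha _ (by omega) (by omega)

lemma entry_nonneg (ha : ∀ i, 1 ≤ i → i ≤ n → 0 < a i) (i j : Fin n) :
    0 ≤ antiBidiag n a i j := by
  by_cases h1 : (i : ℕ) + j + 1 = n
  · exact (entry_pos1 ha i j h1).le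
  by_cases h2 : (i : ℕ) + j = n
  · exact (entry_pos2 ha i j h2).le
  · rw [entry_zero i j h1 h2]

lemma isSymm : (antiBidiag n a).IsSymm := by
  ext i j
  simp only [Matrix.transpose_apply, antiBidiag, Matrix.of_apply]
  rw [add_comm (j : ℕ) i, min_comm (j : ℕ) i]

lemma mulVec_eq_zero (ha : ∀ i, 1 ≤ i → i ≤ n → 0 < a i) (v : Fin n → ℝ)
    (hv : antiBidiag n a *ᵥ v = 0) : v = 0 := by
  have key : ∀ m : ℕ, ∀ hm : m < n, v ⟨n - 1 - m, by omega⟩ = 0 := by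
    intro m
    induction m using Nat.strong_induction_on with
    | _ m IH =>
      intro hm
      have hrow := congrFun hv ⟨m, hm⟩
      rw [Matrix.mulVec, dotProduct] at hrow
      set k₁ : Fin n := ⟨n - 1 - m, by omega⟩ with hk₁
      have hsum : (∑ k, antiBidiag n a ⟨m, hm⟩ k * v k)
          = antiBidiag n a ⟨m, hm⟩ k₁ * v k₁ := by
        refine Finset.sum_eq_single_of_mem k₁ (Finset.mem_univ _) (fun k _ hk => ?_)
        have hkn := k.isLt
        by_cases h2 : m + (k : ℕ) = n
        · have hm1 : 1 ≤ m := by omega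
          have hkv : k = (⟨n - 1 - (m - 1), by omega⟩ : Fin n) := by
            apply Fin.ext; simp; omega
          rw [hkv, IH (m - 1) (by omega) (by omega), mul_zero]
        · by_cases h1 : m + (k : ℕ) + 1 = n
          · exact absurd (Fin.ext (by simp [hk₁]; omega)) hk
          · rw [entry_zero ⟨m, hm⟩ k (by simpa using h1) (by simpa using h2), zero_mul]
      rw [hsum, Pi.zero_apply] at hrow
      have hpos : 0 < antiBidiag n a ⟨m, hm⟩ k₁ :=
        entry_pos1 ha _ _ (by simp [hk₁]; omega)
      exact (mul_eq_zero.mp hrow).resolve_left hpos.ne'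
  funext j
  have hj := j.isLt
  have := key (n - 1 - (j : ℕ)) (by omega)
  have hjj : (⟨n - 1 - (n - 1 - (j : ℕ)), by omega⟩ : Fin n) = j := by
    apply Fin.ext; simp; omega
  rw [hjj] at this
  simpa using this

end ABaux

theorem stmt_11 (n : ℕ) (a : ℕ → ℝ) (ha : ∀ i, 1 ≤ i → i ≤ n → 0 < a i) :
    ((antiBidiag n a) ^ 2).IsSymm ∧
    ((antiBidiag n a) ^ 2).PosDef ∧
    (∀ i j : Fin n, (i : ℕ) + 1 < j ∨ (j : ℕ) + 1 < i →
      ((antiBidiag n a) ^ 2) i j = 0) ∧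
    (∀ i j : Fin n, (i : ℕ) + 1 = j → 0 < ((antiBidiag n a) ^ 2) i j) := by
  set A := antiBidiag n a with hA
  have hsymm : A.IsSymm := ABaux.isSymm
  have hsq : A ^ 2 = A * A := sq A
  have hsymm2 : (A ^ 2).IsSymm := by
    rw [Matrix.IsSymm, hsq, Matrix.transpose_mul, hsymm]
  refine ⟨hsymm2, ?_, ?_, ?_⟩
  · refine Matrix.PosDef.of_dotProduct_mulVec_pos ?_ fun x hx => ?_
    · rw [Matrix.IsHermitian]
      ext i j
      rw [Matrix.conjTranspose_apply, hsymm2.apply, star_trivial]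
    · have hAx : A *ᵥ x ≠ 0 := fun h => hx (ABaux.mulVec_eq_zero ha x h)
      have : dotProduct (star x) ((A ^ 2) *ᵥ x)
          = dotProduct (A *ᵥ x) (star (A *ᵥ x)) := by
        have hvm : x ᵥ* A = A *ᵥ x := by
          nth_rewrite 1 [← hsymm]; rw [Matrix.vecMul_transpose]
        rw [star_trivial, star_trivial, hsq, ← Matrix.mulVec_mulVec,
          dotProduct_mulVec, hvm]
      rw [this]
      exact dotProduct_self_star_pos_iff.mpr hAx
  · intro i j hij
    rw [hsq, Matrix.mul_apply]
    refine Finset.sum_eq_zero fun k _ => ?_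
    by_cases h1 : (i : ℕ) + k + 1 = n ∨ (i : ℕ) + k = n
    · by_cases h2 : (k : ℕ) + j + 1 = n ∨ (k : ℕ) + j = n
      · exfalso; omega
      · push_neg at h2
        exact mul_eq_zero_of_right _ (ABaux.entry_zero k j h2.1 h2.2)
    · push_neg at h1
      exact mul_eq_zero_of_left (ABaux.entry_zero i k h1.1 h1.2) _
  · intro i j hij
    have hi := i.isLt; have hj := j.isLt
    rw [hsq, Matrix.mul_apply]
    refine Finset.sum_pos' (fun k _ => mul_nonneg (ABaux.entry_nonneg ha i k)
      (ABaux.entry_nonneg ha k j)) ⟨⟨n - 1 - (i : ℕ), by omega⟩, Finset.mem_univ _, ?_⟩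
    exact mul_pos (ABaux.entry_pos1 ha _ _ (by simp; omega))
      (ABaux.entry_pos2 ha _ _ (by simp; omega))
end

section
/- (Necessity) If A is an n×n real symmetric anti-bidiagonal matrix with positive entries a₁, ..., aₙ, then the eigenvalues of A can be ordered λ₁ > −λ₂ > λ₃ > ... > (−1)^{n−1}λₙ > 0, i.e., they alternate in sign and have strictly decreasing absolute values, with the largest-in-modulus eigenvalue positive. -/
open Polynomial

namespace Stmt13


noncomputable def pr (m : ℕ) (u : ℕ → ℝ) : Polynomial ℝ :=
  ∏ i ∈ Finset.range m, (X - C (u i))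

lemma pr_monic (m : ℕ) (u : ℕ → ℝ) : (pr m u).Monic :=
  monic_prod_of_monic _ _ fun i _ => monic_X_sub_C (u i)

lemma pr_natDegree (m : ℕ) (u : ℕ → ℝ) : (pr m u).natDegree = m := by
  rw [pr, natDegree_prod]
  · simp [natDegree_X_sub_C]
  · intro i _; exact X_sub_C_ne_zero (u i)

lemma eval_pr (m : ℕ) (u : ℕ → ℝ) (b : ℝ) :
    (pr m u).eval b = ∏ i ∈ Finset.range m, (b - u i) := by
  simp [pr, eval_prod]

/-- product of negatives -/
lemma prod_neg_sign (s : Finset ℕ) (f : ℕ → ℝ) (h : ∀ i ∈ s, f i < 0) :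
    (-1 : ℝ) ^ s.card * ∏ i ∈ s, f i > 0 := by
  have : ∏ i ∈ s, f i = (-1 : ℝ) ^ s.card * ∏ i ∈ s, (-(f i)) := by
    rw [← Finset.prod_const, ← Finset.prod_mul_distrib]
    simp
  rw [this]
  have hpos : 0 < ∏ i ∈ s, (-(f i)) := Finset.prod_pos fun i hi => by linarith [h i hi]
  have := mul_pos hpos hpos
  calc (0:ℝ) < ∏ i ∈ s, (-(f i)) := hpos
  _ = (-1:ℝ)^s.card * ((-1:ℝ)^s.card * ∏ i ∈ s, (-(f i))) := by
      rw [← mul_assoc, ← pow_add]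
      simp [pow_add, ← two_mul, pow_mul]
  _ = _ := rfl

lemma sign_pr (m t : ℕ) (u : ℕ → ℝ) (b : ℝ)
    (h1 : ∀ j < t, b < u j) (h2 : ∀ j, t ≤ j → j < m → u j < b) (ht : t ≤ m) :
    0 < (-1 : ℝ) ^ t * (pr m u).eval b := by
  rw [eval_pr, ← Finset.prod_range_mul_prod_Ico _ ht]
  have hA := prod_neg_sign (Finset.range t) (fun i => b - u i)
    (fun i hi => by have := h1 i (Finset.mem_range.mp hi); show b - u i < 0; linarith)
  have hB : 0 < ∏ i ∈ Finset.Ico t m, (b - u i) :=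
    Finset.prod_pos fun i hi => by
      have := Finset.mem_Ico.mp hi
      have := h2 i this.1 this.2; linarith
  rw [Finset.card_range] at hA
  calc (0:ℝ) < ((-1:ℝ)^t * ∏ i ∈ Finset.range t, (b - u i)) * ∏ i ∈ Finset.Ico t m, (b - u i) :=
        mul_pos hA hB
    _ = (-1:ℝ)^t * ((∏ i ∈ Finset.range t, (b - u i)) * ∏ i ∈ Finset.Ico t m, (b - u i)) := by ring

lemma split_pr (m t : ℕ) (u : ℕ → ℝ) (b : ℝ)
    (h1 : ∀ j < t, b < u j) (h2 : ∀ j, t + 2 ≤ j → j < m → u j < b) (ht : t + 2 ≤ m)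
    (hs : 0 < (-1 : ℝ) ^ (t+1) * (pr m u).eval b) :
    (b - u t) * (b - u (t+1)) < 0 := by
  rw [eval_pr, ← Finset.prod_range_mul_prod_Ico _ ht, Finset.prod_range_succ,
    Finset.prod_range_succ] at hs
  have hA := prod_neg_sign (Finset.range t) (fun i => b - u i)
    (fun i hi => by have := h1 i (Finset.mem_range.mp hi); show b - u i < 0; linarith)
  rw [Finset.card_range] at hA
  have hB : 0 < ∏ i ∈ Finset.Ico (t+2) m, (b - u i) :=
    Finset.prod_pos fun i hi => by
      have := Finset.mem_Ico.mp hi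
      have := h2 i this.1 this.2; linarith
  set M := (b - u t) * (b - u (t+1)) with hM
  set A := ∏ i ∈ Finset.range t, (b - u i)
  set B := ∏ i ∈ Finset.Ico (t+2) m, (b - u i)
  have hexp : (-1:ℝ)^(t+1) * (A * (b - u t) * (b - u (t+1)) * B) =
      -(((-1:ℝ)^t * A) * (M * B)) := by rw [pow_succ, hM]; ring
  rw [hexp] at hs
  have h0 : ((-1:ℝ)^t * A) * (M * B) < 0 := by linarith
  by_contra hc
  push_neg at hc
  have : 0 ≤ ((-1:ℝ)^t * A) * (M * B) :=
    mul_nonneg (le_of_lt hA) (mul_nonneg hc (le_of_lt hB))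
  linarith





/-- identification: monic poly of degree m with m distinct roots -/
lemma ident : ∀ (m : ℕ) (p : Polynomial ℝ) (u : ℕ → ℝ), p.Monic → p.natDegree = m →
    (∀ i j, i < j → j < m → u j < u i) → (∀ i < m, p.eval (u i) = 0) → p = pr m u := by
  intro m
  induction m with
  | zero => intro p u hm hd _ _
            rw [Polynomial.Monic.natDegree_eq_zero hm] at hd
            simp [hd, pr]
  | succ m ih =>
    intro p u hm hd hanti hroot
    have hdvd : (X - C (u 0)) ∣ p := dvd_iff_isRoot.mpr (hroot 0 (Nat.succ_pos m))
    obtain ⟨q, hq⟩ := hdvd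
    have hqm : q.Monic := by
      have := hm
      rw [hq] at this
      exact (monic_X_sub_C (u 0)).of_mul_monic_left this
    have hqd : q.natDegree = m := by
      have := hd
      rw [hq, natDegree_mul (X_sub_C_ne_zero (u 0)) hqm.ne_zero, natDegree_X_sub_C] at this
      omega
    have hqroot : ∀ i < m, q.eval (u (i+1)) = 0 := by
      intro i hi
      have h0 := hroot (i+1) (by omega)
      rw [hq, eval_mul, eval_sub, eval_X, eval_C] at h0
      have hne : u (i+1) - u 0 ≠ 0 := by
        have := hanti 0 (i+1) (Nat.succ_pos i) (by omega); linarith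
      exact (mul_eq_zero.mp h0).resolve_left hne
    have := ih q (fun i => u (i+1)) hqm hqd
      (fun i j hij hj => hanti (i+1) (j+1) (by omega) (by omega)) hqroot
    rw [hq, this, pr, pr, Finset.prod_range_succ']; ring

lemma uniq : ∀ (m : ℕ) (u v : ℕ → ℝ), (∀ i j, i < j → j < m → u j < u i) →
    (∀ i j, i < j → j < m → v j < v i) → pr m u = pr m v → ∀ i < m, u i = v i := by
  intro m
  induction m with
  | zero => intro _ _ _ _ _ i hi; omega
  | succ m ih =>
    intro u v hu hv heq
    have key : ∀ (x y : ℕ → ℝ), (∀ i j, i < j → j < m+1 → x j < x i) →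
        (∀ i j, i < j → j < m+1 → y j < y i) → pr (m+1) x = pr (m+1) y → y 0 ≤ x 0 := by
      intro x y hx hy he
      have hroot : (pr (m+1) x).eval (y 0) = 0 := by
        rw [he, pr, eval_prod]
        exact Finset.prod_eq_zero (Finset.mem_range.mpr (Nat.succ_pos m)) (by simp)
      rw [pr, eval_prod] at hroot
      obtain ⟨i, hi, hz⟩ := Finset.prod_eq_zero_iff.mp hroot
      have : y 0 = x i := by
        have : eval (y 0) (X - C (x i)) = y 0 - x i := by simp
        rw [this] at hz; linarith
      rcases Nat.eq_zero_or_pos i with h0 | h0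
      · rw [this, h0]
      · have := hx 0 i h0 (Finset.mem_range.mp hi); linarith
    have h0 : u 0 = v 0 :=
      le_antisymm (key v u hv hu heq.symm) (key u v hu hv heq)
    intro i hi
    rcases Nat.eq_zero_or_pos i with h | h
    · rw [h]; exact h0
    · have hcan : pr m (fun j => u (j+1)) = pr m (fun j => v (j+1)) := by
        have e1 : pr (m+1) u = (X - C (u 0)) * pr m (fun j => u (j+1)) := by
          rw [pr, pr, Finset.prod_range_succ']; ring
        have e2 : pr (m+1) v = (X - C (v 0)) * pr m (fun j => v (j+1)) := by
          rw [pr, pr, Finset.prod_range_succ']; ring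
        rw [e1, e2, h0] at heq
        exact mul_left_cancel₀ (X_sub_C_ne_zero (v 0)) heq
      obtain ⟨j, rfl⟩ := Nat.exists_eq_add_of_lt h
      have := ih (fun j => u (j+1)) (fun j => v (j+1))
        (fun i j hij hj => hu (i+1) (j+1) (by omega) (by omega))
        (fun i j hij hj => hv (i+1) (j+1) (by omega) (by omega)) hcan j (by omega)
      simpa using this

/-- root between two points of opposite sign -/
lemma root_between (p : Polynomial ℝ) (x y : ℝ) (hxy : x < y)
    (hs : p.eval x * p.eval y < 0) : ∃ r, x < r ∧ r < y ∧ p.eval r = 0 := by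
  have hc : ContinuousOn (fun t => p.eval t) (Set.Icc x y) := p.continuous_aeval.continuousOn
  rcases lt_or_ge (p.eval x) 0 with h | h
  · have hy : 0 < p.eval y := by nlinarith
    have := intermediate_value_Ioo (le_of_lt hxy) hc
    have hm : (0:ℝ) ∈ Set.Ioo (p.eval x) (p.eval y) := ⟨h, hy⟩
    obtain ⟨r, hr, hr0⟩ := this hm
    exact ⟨r, hr.1, hr.2, hr0⟩
  · have hx : 0 < p.eval x := by
      rcases h.lt_or_eq with h' | h'
      · exact h'
      · exfalso; rw [← h'] at hs; simp at hs
    have hy : p.eval y < 0 := by nlinarith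
    have := intermediate_value_Ioo' (le_of_lt hxy) hc
    have hm : (0:ℝ) ∈ Set.Ioo (p.eval y) (p.eval x) := ⟨hy, hx⟩
    obtain ⟨r, hr, hr0⟩ := this hm
    exact ⟨r, hr.1, hr.2, hr0⟩

/-- root above a point where monic p is negative -/
lemma root_above (p : Polynomial ℝ) (hm : p.Monic) (hdeg : 0 < p.natDegree) (x : ℝ)
    (hx : p.eval x < 0) : ∃ r, x < r ∧ p.eval r = 0 := by
  have ht : Filter.Tendsto (fun t => p.eval t) Filter.atTop Filter.atTop :=
    p.tendsto_atTop_of_leadingCoeff_nonneg (by rwa [← natDegree_pos_iff_degree_pos])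
      (by rw [hm.leadingCoeff]; norm_num)
  obtain ⟨b, hb1, hb2⟩ := ((ht.eventually_gt_atTop 0).and (Filter.eventually_gt_atTop x)).exists
  obtain ⟨r, h1, _, h3⟩ := root_between p x b hb2 (by nlinarith)
  exact ⟨r, h1, h3⟩




noncomputable def S (d : ℕ → ℝ) : ℕ → Polynomial ℝ
  | 0 => 1
  | 1 => X
  | (k+2) => X * S d (k+1) - C (d (k+2)) * S d k

lemma S_monic_natDegree (d : ℕ → ℝ) : ∀ k, (S d k).Monic ∧ (S d k).natDegree = k := by
  have main : ∀ k, ((S d k).Monic ∧ (S d k).natDegree = k) ∧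
      ((S d (k+1)).Monic ∧ (S d (k+1)).natDegree = k+1) := by
    intro k
    induction k with
    | zero => refine ⟨⟨monic_one, natDegree_one⟩, ⟨monic_X, natDegree_X⟩⟩
    | succ k ih =>
      obtain ⟨⟨hm0, hd0⟩, ⟨hm1, hd1⟩⟩ := ih
      refine ⟨⟨hm1, hd1⟩, ?_⟩
      have hXm : (X * S d (k+1)).Monic := monic_X.mul hm1
      have hXd : (X * S d (k+1)).natDegree = k + 2 := by
        rw [natDegree_mul X_ne_zero hm1.ne_zero, natDegree_X, hd1]; omega
      have hlt : (-(C (d (k+2)) * S d k)).degree < (X * S d (k+1)).degree := by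
        rw [degree_neg]
        have h1 : (C (d (k+2)) * S d k).degree ≤ (S d k).degree :=
          le_trans (degree_mul_le _ _) (by simpa using add_le_add degree_C_le (le_refl (S d k).degree))
        have h2 : (S d k).degree < (X * S d (k+1)).degree := by
          rcases eq_or_ne (S d k) 0 with h | h
          · rw [h, degree_zero, degree_eq_natDegree hXm.ne_zero]; exact WithBot.bot_lt_coe _
          · rw [degree_eq_natDegree h, degree_eq_natDegree hXm.ne_zero, hd0, hXd]
            exact_mod_cast (by omega : k < k + 2)
        exact lt_of_le_of_lt h1 h2
      have : (S d (k+2)) = X * S d (k+1) + -(C (d (k+2)) * S d k) := by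
        rw [S]; ring
      constructor
      · rw [this]; exact hXm.add_of_left hlt
      · rw [this, natDegree_eq_of_degree_eq (degree_add_eq_left_of_degree_lt hlt), hXd]
  exact fun k => (main k).1

lemma S_parity (d : ℕ → ℝ) : ∀ k, (S d k).comp (-X) = (-1) ^ k * S d k := by
  have main : ∀ k, ((S d k).comp (-X) = (-1) ^ k * S d k) ∧
      ((S d (k+1)).comp (-X) = (-1) ^ (k+1) * S d (k+1)) := by
    intro k
    induction k with
    | zero => constructor <;> simp [S]
    | succ k ih =>
      obtain ⟨h0, h1⟩ := ih
      refine ⟨h1, ?_⟩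
      show (S d (k+2)).comp (-X) = _
      rw [show (S d (k+2)) = X * S d (k+1) - C (d (k+2)) * S d k from rfl,
        sub_comp, mul_comp, mul_comp, X_comp, C_comp, h0, h1]
      ring
  exact fun k => (main k).1

lemma S_eval_neg (d : ℕ → ℝ) (k : ℕ) (x : ℝ) :
    (S d k).eval (-x) = (-1) ^ k * (S d k).eval x := by
  have := congrArg (eval x) (S_parity d k)
  rwa [eval_comp, eval_neg, eval_X, eval_mul, eval_pow, eval_neg, eval_one] at this

/-- Wronskian: with e j = d (j+1) -/
lemma S_wronskian (d : ℕ → ℝ) :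
    ∀ k, S d (k+2) * S (fun j => d (j+1)) k - S d (k+1) * S (fun j => d (j+1)) (k+1)
      = - C (∏ j ∈ Finset.range (k+1), d (j+2)) := by
  intro k
  induction k with
  | zero => show (X * X - C (d 2) * 1) * 1 - X * X = _
            simp [S]
  | succ k ih =>
    have hd : S d (k+3) = X * S d (k+2) - C (d (k+3)) * S d (k+1) := rfl
    have he : S (fun j => d (j+1)) (k+2)
        = X * S (fun j => d (j+1)) (k+1) - C (d (k+3)) * S (fun j => d (j+1)) k := rfl
    rw [hd, he, Finset.prod_range_succ]
    have : - C ((∏ j ∈ Finset.range (k+1), d (j+2)) * d (k+3))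
        = C (d (k+3)) * (- C (∏ j ∈ Finset.range (k+1), d (j+2))) := by
      rw [C_mul]; ring
    rw [this, ← ih]; ring





def ilace (m : ℕ) (x y : ℕ → ℝ) : Prop := ∀ i < m, x i < y i ∧ y (i+1) < x i

lemma dec_of_consec (f : ℕ → ℝ) (m : ℕ) (h : ∀ i, i + 1 ≤ m → f (i+1) < f i) :
    ∀ i j, i < j → j ≤ m → f j < f i := by
  intro i j hij hj
  induction j with
  | zero => omega
  | succ j ihj =>
    rcases Nat.lt_or_ge i j with h' | h'
    · exact lt_trans (h j hj) (ihj h' (by omega))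
    · have : i = j := by omega
      rw [this]; exact h j hj

lemma ilace_outer_dec {m : ℕ} {x y : ℕ → ℝ} (h : ilace m x y) :
    ∀ i j, i < j → j ≤ m → y j < y i :=
  dec_of_consec y m fun i hi => lt_trans (h i (by omega)).2 (h i (by omega)).1

lemma ilace_inner_dec {m : ℕ} {x y : ℕ → ℝ} (h : ilace m x y) :
    ∀ i j, i < j → j < m → x j < x i := fun i j hij hj =>
  dec_of_consec x (m-1) (fun i hi => lt_trans (h (i+1) (by omega)).1 (h i (by omega)).2)
    i j hij (by omega)


lemma opp_sign (s e1 e2 : ℝ) (h1 : 0 < s * e1) (h2 : 0 < (-s) * e2) : e1 * e2 < 0 := by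
  nlinarith [mul_pos h1 h2, sq_nonneg s, sq_nonneg (e1*e2)]

lemma opp_sign_pow (i : ℕ) (e1 e2 : ℝ) (h1 : 0 < (-1:ℝ)^(i+1) * e1)
    (h2 : 0 < (-1:ℝ)^(i+2) * e2) : e1 * e2 < 0 := by
  apply opp_sign ((-1:ℝ)^(i+1)) e1 e2 h1
  have : (-((-1:ℝ)^(i+1))) = (-1:ℝ)^(i+2) := by rw [pow_succ]; ring
  rw [this]; exact h2

lemma sign_step'' : True := trivial

lemma sign_step (f : ℕ → ℝ) (hf : ∀ j, 0 < f j) (m : ℕ) (x x' : ℕ → ℝ)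
    (hx : S f (m+1) = pr (m+1) x) (hx' : S f m = pr m x') (hil : ilace m x' x) :
    ∀ i ≤ m, 0 < (-1:ℝ)^(i+1) * (S f (m+2)).eval (x i) := by
  intro i hi
  have hx0 : (S f (m+1)).eval (x i) = 0 := by
    rw [hx, eval_pr]
    exact Finset.prod_eq_zero (i := i) (Finset.mem_range.mpr (by omega)) (by ring)
  have hrec : (S f (m+2)).eval (x i)
      = - (f (m+2) * (pr m x').eval (x i)) := by
    rw [show S f (m+2) = X * S f (m+1) - C (f (m+2)) * S f m from rfl]
    rw [eval_sub, eval_mul, eval_mul, eval_X, eval_C, hx0, ← hx']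
    ring
  have hsgn : 0 < (-1:ℝ)^i * (pr m x').eval (x i) := by
    apply sign_pr m i x' (x i) _ _ (by omega)
    · intro j hj
      have h1 : x i < x' (i-1) := by
        have := (hil (i-1) (by omega)).2
        have hieq : i - 1 + 1 = i := by omega
        rwa [hieq] at this
      rcases Nat.lt_or_ge j (i-1) with h' | h'
      · exact lt_trans h1 (ilace_inner_dec hil j (i-1) (by omega) (by omega))
      · have : j = i - 1 := by omega
        rwa [this]
    · intro j hj1 hj2
      have h2 : x' i < x i := (hil i (by omega)).1
      rcases Nat.lt_or_ge i j with h' | h'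
      · exact lt_trans (ilace_inner_dec hil i j h' hj2) h2
      · have : j = i := by omega
        rw [this]; exact h2
  rw [hrec]
  have hfpos := hf (m+2)
  calc (0:ℝ) < f (m+2) * ((-1:ℝ)^i * (pr m x').eval (x i)) := mul_pos hfpos hsgn
    _ = (-1:ℝ)^(i+1) * -(f (m+2) * (pr m x').eval (x i)) := by ring

lemma step (f : ℕ → ℝ) (hf : ∀ j, 0 < f j) (m : ℕ) (x x' : ℕ → ℝ)
    (hx : S f (m+1) = pr (m+1) x) (hx' : S f m = pr m x') (hil : ilace m x' x) :
    ∃ y, S f (m+2) = pr (m+2) y ∧ ilace (m+1) x y := by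
  set p := S f (m+2) with hp
  have hmono := (S_monic_natDegree f (m+2)).1
  have hdeg := (S_monic_natDegree f (m+2)).2
  have hsg := sign_step f hf m x x' hx hx' hil
  have xdec := ilace_outer_dec hil
  -- top root
  have htop : ∃ r, x 0 < r ∧ p.eval r = 0 := by
    apply root_above p hmono (by rw [hp, hdeg]; omega)
    have := hsg 0 (by omega)
    simp only [zero_add, pow_one] at this
    linarith
  obtain ⟨r0, hr0a, hr0b⟩ := htop
  -- mid roots
  have hmid : ∀ i, ∃ r, i + 1 ≤ m → (x (i+1) < r ∧ r < x i ∧ p.eval r = 0) := by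
    intro i
    by_cases h : i + 1 ≤ m
    · have s1 := hsg i (by omega)
      have s2 := hsg (i+1) (by omega)
      have hprod : p.eval (x (i+1)) * p.eval (x i) < 0 := by
        have := opp_sign_pow i (p.eval (x i)) (p.eval (x (i+1))) s1 (by exact_mod_cast s2)
        nlinarith [this]
      obtain ⟨r, h1, h2, h3⟩ := root_between p (x (i+1)) (x i)
        (xdec i (i+1) (by omega) (by omega)) hprod
      exact ⟨r, fun _ => ⟨h1, h2, h3⟩⟩
    · exact ⟨0, fun h' => absurd h' h⟩
  choose rm hrm using hmid
  -- bottom root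
  have hbot : ∃ r, r < x m ∧ p.eval r = 0 := by
    have ht : Filter.Tendsto (fun t => p.eval t) Filter.atTop Filter.atTop :=
      p.tendsto_atTop_of_leadingCoeff_nonneg
        (by rw [← natDegree_pos_iff_degree_pos, hp, hdeg]; omega)
        (by rw [hmono.leadingCoeff]; norm_num)
    obtain ⟨b, hb1, hb2⟩ := ((ht.eventually_gt_atTop 0).and
      (Filter.eventually_gt_atTop (-(x m)))).exists
    have hnb : p.eval (-b) = (-1:ℝ)^(m+2) * p.eval b := S_eval_neg f (m+2) b
    have hsm := hsg m (le_refl m)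
    have hprod : p.eval (x m) * p.eval (-b) < 0 := by
      have hpb : (0:ℝ) < (-1:ℝ)^(m+2) * p.eval (-b) := by
        rw [hnb]
        calc (0:ℝ) < p.eval b := hb1
          _ = (-1:ℝ)^(m+2) * ((-1:ℝ)^(m+2) * p.eval b) := by
              rw [← mul_assoc, ← pow_add]
              simp [pow_add, pow_mul, ← two_mul]
      exact opp_sign_pow m (p.eval (x m)) (p.eval (-b)) hsm hpb
    have hprod' : p.eval (-b) * p.eval (x m) < 0 := by nlinarith [hprod]
    obtain ⟨r, h1, h2, h3⟩ := root_between p (-b) (x m) (by linarith) hprod'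
    exact ⟨r, h2, h3⟩
  obtain ⟨rb, hrba, hrbb⟩ := hbot
  classical
  set y : ℕ → ℝ := fun j => if j = 0 then r0 else if j ≤ m then rm (j-1) else rb with hy
  have hy0 : y 0 = r0 := by simp [hy]
  have hyj : ∀ j, 1 ≤ j → j ≤ m → y j = rm (j-1) := by
    intro j h1 h2
    show (if j = 0 then r0 else if j ≤ m then rm (j-1) else rb) = rm (j-1)
    rw [if_neg (by omega), if_pos h2]
  have hyb : y (m+1) = rb := by
    show (if m+1 = 0 then r0 else if m+1 ≤ m then rm (m+1-1) else rb) = rb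
    rw [if_neg (by omega), if_neg (by omega)]
  have hmidj : ∀ j, 1 ≤ j → j ≤ m → x j < y j ∧ y j < x (j-1) ∧ p.eval (y j) = 0 := by
    intro j h1 h2
    have := hrm (j-1) (by omega)
    have hj1 : j - 1 + 1 = j := by omega
    rw [hj1] at this
    rw [hyj j h1 h2]
    exact ⟨this.1, this.2.1, this.2.2⟩
  have hil2 : ilace (m+1) x y := by
    intro i hi
    constructor
    · rcases Nat.eq_zero_or_pos i with h | h
      · rw [h, hy0]; exact hr0a
      · exact (hmidj i h (by omega)).1
    · rcases Nat.lt_or_ge (i+1) (m+1) with h | h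
      · have := (hmidj (i+1) (by omega) (by omega)).2.1
        simpa using this
      · have : i = m := by omega
        rw [this, hyb]; exact hrba
  refine ⟨y, ?_, hil2⟩
  apply ident (m+2) p y hmono hdeg
  · intro i j hij hj
    apply dec_of_consec y (m+1) _ i j hij (by omega)
    intro i hi
    calc y (i+1) < x i := (hil2 i (by omega)).2
      _ < y i := (hil2 i (by omega)).1
  · intro i hi
    rcases Nat.eq_zero_or_pos i with h | h
    · rw [h, hy0]; exact hr0b
    · rcases Nat.lt_or_ge i (m+1) with h' | h'
      · exact (hmidj i h (by omega)).2.2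
      · have : i = m + 1 := by omega
        rw [this, hyb]; exact hrbb

lemma pos_of_mul_pos_pos {a b : ℝ} (h : 0 < a * b) (hb : 0 < b) : 0 < a := by
  nlinarith

lemma cross_step (d : ℕ → ℝ) (hd : ∀ j, 0 < d j) (k : ℕ)
    (A Anew B Bnew : ℕ → ℝ)
    (hA : S d (k+3) = pr (k+3) Anew)
    (hB2 : S (fun j => d (j+1)) (k+2) = pr (k+2) Bnew)
    (hB1 : S (fun j => d (j+1)) (k+1) = pr (k+1) B)
    (hilA : ilace (k+2) A Anew)
    (hilB : ilace (k+1) B Bnew)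
    (hcross : ilace (k+1) B A) :
    ilace (k+2) Bnew Anew := by
  intro i hi
  set b := Bnew i with hb
  -- b is a root of S e (k+2)
  have hb0 : (S (fun j => d (j+1)) (k+2)).eval b = 0 := by
    rw [hB2, eval_pr]
    exact Finset.prod_eq_zero (i := i) (Finset.mem_range.mpr (by omega)) (by ring)
  -- Wronskian evaluated at b
  set w := ∏ j ∈ Finset.range (k+2), d (j+2) with hw
  have hwpos : 0 < w := Finset.prod_pos fun j _ => hd (j+2)
  have hwr := S_wronskian d (k+1)
  have hev : (S d (k+3)).eval b * (S (fun j => d (j+1)) (k+1)).eval b = -w := by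
    have := congrArg (eval b) hwr
    rw [eval_sub, eval_mul, eval_mul, hb0, eval_neg, eval_C] at this
    rw [← hw] at this
    linarith [this]
  set E1 := (S d (k+3)).eval b with hE1
  set E2 := (S (fun j => d (j+1)) (k+1)).eval b with hE2
  -- sign of E2
  have hE2sgn : 0 < (-1:ℝ)^i * E2 := by
    rw [hE2, hB1]
    apply sign_pr (k+1) i B b _ _ (by omega)
    · intro j hj
      have h1 : b < B (i-1) := by
        have := (hilB (i-1) (by omega)).2
        have hieq : i - 1 + 1 = i := by omega
        rwa [hieq] at this
      rcases Nat.lt_or_ge j (i-1) with h' | h'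
      · exact lt_trans h1 (ilace_inner_dec hilB j (i-1) (by omega) (by omega))
      · have : j = i - 1 := by omega
        rwa [this]
    · intro j hj1 hj2
      have h2 : B i < b := (hilB i (by omega)).1
      rcases Nat.lt_or_ge i j with h' | h'
      · exact lt_trans (ilace_inner_dec hilB i j h' hj2) h2
      · have : j = i := by omega
        rw [this]; exact h2
  have hE1sgn : 0 < (-1:ℝ)^(i+1) * E1 := by
    apply pos_of_mul_pos_pos (b := (-1:ℝ)^i * E2) _ hE2sgn
    have : ((-1:ℝ)^(i+1) * E1) * ((-1:ℝ)^i * E2) = ((-1:ℝ)^(2*i+1)) * (E1 * E2) := by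
      rw [show 2*i+1 = (i+1)+i by omega, pow_add]; ring
    rw [this, hev, pow_succ, pow_mul]
    simp
    positivity
  -- split product
  have hAnewdec := ilace_outer_dec hilA
  have hsplit : (b - Anew i) * (b - Anew (i+1)) < 0 := by
    apply split_pr (k+3) i Anew b _ _ (by omega)
    · rw [← hA]; exact hE1sgn
    · intro j hj
      have h1 : b < Anew (i-1) := by
        have c1 : b < B (i-1) := by
          have := (hilB (i-1) (by omega)).2
          have hieq : i - 1 + 1 = i := by omega
          rwa [hieq] at this
        have c2 : B (i-1) < A (i-1) := (hcross (i-1) (by omega)).1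
        have c3 : A (i-1) < Anew (i-1) := (hilA (i-1) (by omega)).1
        linarith
      rcases Nat.lt_or_ge j (i-1) with h' | h'
      · exact lt_trans h1 (hAnewdec j (i-1) (by omega) (by omega))
      · have : j = i - 1 := by omega
        rwa [this]
    · intro j hj1 hj2
      have h2 : Anew (i+2) < b := by
        have c1 : Anew (i+2) < A (i+1) := by
          have := (hilA (i+1) (by omega)).2
          simpa [show i+1+1 = i+2 by omega] using this
        have c2 : A (i+1) < B i := (hcross i (by omega)).2
        have c3 : B i < Bnew i := (hilB i (by omega)).1
        rw [hb]; linarith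
      rcases Nat.lt_or_ge (i+2) j with h' | h'
      · exact lt_trans (hAnewdec (i+2) j h' (by omega)) h2
      · have : j = i + 2 := by omega
        rw [this]; exact h2
  have hord : Anew (i+1) < Anew i := hAnewdec i (i+1) (by omega) (by omega)
  rcases mul_neg_iff.mp hsplit with ⟨h1, h2⟩ | ⟨h1, h2⟩
  · exact ⟨by linarith, by linarith⟩
  · constructor <;> linarith

lemma grand (d : ℕ → ℝ) (hd : ∀ j, 0 < d j) : ∀ k, ∃ A B A' B',
    S d (k+2) = pr (k+2) A ∧ S d (k+1) = pr (k+1) A' ∧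
    S (fun j => d (j+1)) (k+1) = pr (k+1) B ∧ S (fun j => d (j+1)) k = pr k B' ∧
    ilace (k+1) A' A ∧ ilace k B' B ∧ ilace (k+1) B A := by
  intro k
  induction k with
  | zero =>
    set s := Real.sqrt (d 2) with hs
    have hspos : 0 < s := Real.sqrt_pos.mpr (hd 2)
    have hss : s * s = d 2 := Real.mul_self_sqrt (le_of_lt (hd 2))
    refine ⟨fun i => if i = 0 then s else -s, fun _ => 0, fun _ => 0, fun _ => 0, ?_, ?_, ?_, ?_, ?_, ?_, ?_⟩
    · show X * X - C (d 2) * 1 = _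
      rw [pr, Finset.prod_range_succ, Finset.prod_range_one]
      have e0 : (if (0:ℕ) = 0 then s else -s) = s := by norm_num
      have e1 : (if (1:ℕ) = 0 then s else -s) = -s := by norm_num
      norm_num
      rw [← hss, C_mul]
      ring
    · show X = _
      rw [pr, Finset.prod_range_one]
      simp
    · show X = _
      rw [pr, Finset.prod_range_one]
      simp
    · show (1 : Polynomial ℝ) = _
      rw [pr, Finset.prod_range_zero]
    · intro i hi
      have : i = 0 := by omega
      subst this
      have e0 : (if (0:ℕ) = 0 then s else -s) = s := by norm_num
      have e1 : (if (1:ℕ) = 0 then s else -s) = -s := by norm_num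
      norm_num
      exact hspos
    · intro i hi; omega
    · intro i hi
      have : i = 0 := by omega
      subst this
      have e0 : (if (0:ℕ) = 0 then s else -s) = s := by norm_num
      have e1 : (if (1:ℕ) = 0 then s else -s) = -s := by norm_num
      norm_num
      exact hspos
  | succ k ih =>
    obtain ⟨A, B, A', B', hA, hA', hB, hB', hilA, hilB, hcross⟩ := ih
    obtain ⟨Anew, hAnew, hilAnew⟩ := step d hd (k+1) A A' hA hA' hilA
    have he : ∀ j, 0 < (fun j => d (j+1)) j := fun j => hd (j+1)
    obtain ⟨Bnew, hBnew, hilBnew⟩ := step (fun j => d (j+1)) he k B B' hB hB' hilB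
    have hcrossnew : ilace (k+2) Bnew Anew :=
      cross_step d hd k A Anew B Bnew hAnew hBnew hB hilAnew hilBnew hcross
    exact ⟨Anew, Bnew, A, B, hAnew, hA, hBnew, hB, hilAnew, hilBnew, hcrossnew⟩

lemma degree_C_mul_le' (c : ℝ) (p : Polynomial ℝ) : (C c * p).degree ≤ p.degree :=
  le_trans (degree_mul_le _ _) (by simpa using add_le_add degree_C_le (le_refl p.degree))

lemma final_monic (d : ℕ → ℝ) (c : ℝ) (k : ℕ) :
    (S d (k+2) - C c * S (fun j => d (j+1)) (k+1)).Monic ∧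
    (S d (k+2) - C c * S (fun j => d (j+1)) (k+1)).natDegree = k+2 := by
  have hm := (S_monic_natDegree d (k+2)).1
  have hdg := (S_monic_natDegree d (k+2)).2
  have hm1 := (S_monic_natDegree (fun j => d (j+1)) (k+1)).1
  have hd1 := (S_monic_natDegree (fun j => d (j+1)) (k+1)).2
  have hlt : (-(C c * S (fun j => d (j+1)) (k+1))).degree < (S d (k+2)).degree := by
    rw [degree_neg]
    have h1 : (C c * S (fun j => d (j+1)) (k+1)).degree ≤ (S (fun j => d (j+1)) (k+1)).degree :=
      degree_C_mul_le' c _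
    have h2 : (S (fun j => d (j+1)) (k+1)).degree < (S d (k+2)).degree := by
      rw [degree_eq_natDegree hm1.ne_zero, degree_eq_natDegree hm.ne_zero, hd1, hdg]
      exact_mod_cast (by omega : k + 1 < k + 2)
    exact lt_of_le_of_lt h1 h2
  have heq : S d (k+2) - C c * S (fun j => d (j+1)) (k+1)
      = S d (k+2) + -(C c * S (fun j => d (j+1)) (k+1)) := by ring
  constructor
  · rw [heq]; exact hm.add_of_left hlt
  · rw [heq, natDegree_eq_of_degree_eq (degree_add_eq_left_of_degree_lt hlt), hdg]

lemma final_step (d : ℕ → ℝ) (c : ℝ) (hc : 0 < c) (k : ℕ) (A B : ℕ → ℝ)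
    (hA : S d (k+2) = pr (k+2) A)
    (hB : S (fun j => d (j+1)) (k+1) = pr (k+1) B)
    (hcross : ilace (k+1) B A) :
    ∃ g : ℕ → ℝ,
      (S d (k+2) - C c * S (fun j => d (j+1)) (k+1) = pr (k+2) g) ∧
      (A 0 < g 0) ∧ (∀ i < k+1, A (i+1) < g (i+1) ∧ g (i+1) < B i) := by
  set p := S d (k+2) - C c * S (fun j => d (j+1)) (k+1) with hp
  obtain ⟨hmono, hdeg⟩ := final_monic d c k
  have Adec := ilace_outer_dec hcross
  have Bdec := ilace_inner_dec hcross
  -- signs at A i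
  have hsA : ∀ i ≤ k+1, 0 < (-1:ℝ)^(i+1) * p.eval (A i) := by
    intro i hi
    have hz : (S d (k+2)).eval (A i) = 0 := by
      rw [hA, eval_pr]
      exact Finset.prod_eq_zero (i := i) (Finset.mem_range.mpr (by omega)) (by ring)
    have hrec : p.eval (A i) = -(c * (pr (k+1) B).eval (A i)) := by
      rw [hp, eval_sub, eval_mul, eval_C, hz, ← hB]; ring
    have hsgn : 0 < (-1:ℝ)^i * (pr (k+1) B).eval (A i) := by
      apply sign_pr (k+1) i B (A i) _ _ (by omega)
      · intro j hj
        have h1 : A i < B (i-1) := by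
          have := (hcross (i-1) (by omega)).2
          have hieq : i - 1 + 1 = i := by omega
          rwa [hieq] at this
        rcases Nat.lt_or_ge j (i-1) with h' | h'
        · exact lt_trans h1 (Bdec j (i-1) (by omega) (by omega))
        · have : j = i - 1 := by omega
          rwa [this]
      · intro j hj1 hj2
        have h2 : B i < A i := (hcross i (by omega)).1
        rcases Nat.lt_or_ge i j with h' | h'
        · exact lt_trans (Bdec i j h' hj2) h2
        · have : j = i := by omega
          rw [this]; exact h2
    rw [hrec]
    calc (0:ℝ) < c * ((-1:ℝ)^i * (pr (k+1) B).eval (A i)) := mul_pos hc hsgn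
      _ = (-1:ℝ)^(i+1) * -(c * (pr (k+1) B).eval (A i)) := by ring
  -- signs at B i
  have hsB : ∀ i ≤ k, 0 < (-1:ℝ)^(i+1) * p.eval (B i) := by
    intro i hi
    have hz : (S (fun j => d (j+1)) (k+1)).eval (B i) = 0 := by
      rw [hB, eval_pr]
      exact Finset.prod_eq_zero (i := i) (Finset.mem_range.mpr (by omega)) (by ring)
    have hrec : p.eval (B i) = (pr (k+2) A).eval (B i) := by
      rw [hp, eval_sub, eval_mul, eval_C, hz, ← hA]; ring
    rw [hrec]
    apply sign_pr (k+2) (i+1) A (B i) _ _ (by omega)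
    · intro j hj
      have h1 : B i < A i := (hcross i (by omega)).1
      rcases Nat.lt_or_ge j i with h' | h'
      · exact lt_trans h1 (Adec j i h' (by omega))
      · have : j = i := by omega
        rwa [this]
    · intro j hj1 hj2
      have h2 : A (i+1) < B i := (hcross i (by omega)).2
      rcases Nat.lt_or_ge (i+1) j with h' | h'
      · exact lt_trans (Adec (i+1) j h' (by omega)) h2
      · have : j = i + 1 := by omega
        rw [this]; exact h2
  -- top root
  have htop : ∃ r, A 0 < r ∧ p.eval r = 0 := by
    apply root_above p hmono (by rw [hdeg]; omega)
    have := hsA 0 (by omega)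
    simp only [zero_add, pow_one] at this
    linarith
  obtain ⟨g0, hg0a, hg0b⟩ := htop
  -- mid roots in (A (i+1), B i)
  have hmid : ∀ i, ∃ r, i < k + 1 → (A (i+1) < r ∧ r < B i ∧ p.eval r = 0) := by
    intro i
    by_cases h : i < k + 1
    · have s1 := hsB i (by omega)
      have s2 := hsA (i+1) (by omega)
      have hprod : p.eval (A (i+1)) * p.eval (B i) < 0 := by
        have := opp_sign_pow i (p.eval (B i)) (p.eval (A (i+1))) s1 (by exact_mod_cast s2)
        nlinarith [this]
      obtain ⟨r, h1, h2, h3⟩ := root_between p (A (i+1)) (B i) (hcross i h).2 hprod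
      exact ⟨r, fun _ => ⟨h1, h2, h3⟩⟩
    · exact ⟨0, fun h' => absurd h' h⟩
  choose rm hrm using hmid
  classical
  set g : ℕ → ℝ := fun j => if j = 0 then g0 else rm (j-1) with hg
  have hg0 : g 0 = g0 := by simp [hg]
  have hgj : ∀ j, 1 ≤ j → g j = rm (j-1) := by
    intro j h1
    show (if j = 0 then g0 else rm (j-1)) = rm (j-1)
    rw [if_neg (by omega)]
  have hmidj : ∀ i < k+1, A (i+1) < g (i+1) ∧ g (i+1) < B i ∧ p.eval (g (i+1)) = 0 := by
    intro i hi
    have := hrm i hi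
    rw [hgj (i+1) (by omega)]
    simpa using this
  refine ⟨g, ?_, by rw [hg0]; exact hg0a, fun i hi => ⟨(hmidj i hi).1, (hmidj i hi).2.1⟩⟩
  apply ident (k+2) p g hmono hdeg
  · intro i j hij hj
    apply dec_of_consec g (k+1) _ i j hij (by omega)
    intro i hi
    rcases Nat.eq_zero_or_pos i with h | h
    · subst h
      have h1 := (hmidj 0 (by omega)).2.1
      have h2 := (hcross 0 (by omega)).1
      rw [hg0]
      linarith
    · obtain ⟨i', rfl⟩ := Nat.exists_eq_add_of_le h
      have h1 := (hmidj (1+i') (by omega)).2.1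
      have h2 := (hcross (1+i'-1+1) (by omega)).1
      have h3 := (hmidj (1+i'-1) (by omega)).1
      have e1 : 1 + i' - 1 + 1 = 1 + i' := by omega
      rw [e1] at h2 h3
      calc g (1+i'+1) < B (1+i') := h1
        _ < A (1+i') := (hcross (1+i') (by omega)).1
        _ < g (1+i') := h3
  · intro i hi
    rcases Nat.eq_zero_or_pos i with h | h
    · rw [h, hg0]; exact hg0b
    · obtain ⟨i', rfl⟩ := Nat.exists_eq_add_of_le h
      have := (hmidj (1+i'-1) (by omega)).2.2
      have e1 : 1 + i' - 1 + 1 = 1 + i' := by omega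
      rwa [e1] at this

lemma sym_roots (d : ℕ → ℝ) (m : ℕ) (u : ℕ → ℝ) (hu : S d m = pr m u)
    (hdec : ∀ i j, i < j → j < m → u j < u i) : ∀ i < m, u i = - u (m - 1 - i) := by
  have h2 : S d m = pr m (fun i => - u (m-1-i)) := by
    apply ident m _ _ (S_monic_natDegree d m).1 (S_monic_natDegree d m).2
    · intro i j hij hj
      have := hdec (m-1-j) (m-1-i) (by omega) (by omega)
      show -u (m-1-j) < -u (m-1-i)
      linarith
    · intro i hi
      have hz : (S d m).eval (u (m-1-i)) = 0 := by
        rw [hu, eval_pr]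
        exact Finset.prod_eq_zero (i := m-1-i) (Finset.mem_range.mpr (by omega)) (by ring)
      have := S_eval_neg d m (u (m-1-i))
      rw [hz] at this
      simpa using this
  intro i hi
  have := uniq m u (fun i => - u (m-1-i)) hdec
    (fun i j hij hj => by
      have := hdec (m-1-j) (m-1-i) (by omega) (by omega)
      show -u (m-1-j) < -u (m-1-i)
      linarith)
    (hu ▸ h2) i hi
  simpa using this

lemma analytic (d : ℕ → ℝ) (hd : ∀ j, 0 < d j) (c : ℝ) (hc : 0 < c) (k : ℕ) :
    ∃ l : Fin (k+2) → ℝ, AltCond (k+2) l ∧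
      S d (k+2) - C c * S (fun j => d (j+1)) (k+1) = ∏ i, (X - C (l i)) := by
  obtain ⟨A, B, A', B', hA, hA', hB, hB', hilA, hilB, hcross⟩ := grand d hd k
  have Adec : ∀ i j, i < j → j < k+2 → A j < A i :=
    fun i j hij hj => ilace_outer_dec hcross i j hij (by omega)
  have Bdec : ∀ i j, i < j → j < k+1 → B j < B i := ilace_inner_dec hcross
  have Asym : ∀ i < k+2, A i = - A (k+1-i) := by
    have := sym_roots d (k+2) A hA Adec
    intro i hi
    have h := this i hi
    rwa [show k+2-1-i = k+1-i by omega] at h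
  have Bsym : ∀ i < k+1, B i = - B (k-i) := by
    have := sym_roots (fun j => d (j+1)) (k+1) B hB Bdec
    intro i hi
    have h := this i hi
    rwa [show k+1-1-i = k-i by omega] at h
  obtain ⟨g, hg, hg0, hgmid⟩ := final_step d c hc k A B hA hB hcross
  have hAg : ∀ t < k+2, A t < g t := by
    intro t ht
    rcases Nat.eq_zero_or_pos t with h | h
    · rw [h]; exact hg0
    · obtain ⟨t', rfl⟩ := Nat.exists_eq_add_of_le h
      have := (hgmid (1+t'-1) (by omega)).1
      rwa [show 1+t'-1+1 = 1+t' by omega] at this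
  have hgB : ∀ i < k+1, g (i+1) < B i := fun i hi => (hgmid i hi).2
  classical
  set mfn : ℕ → ℝ := fun j => if j % 2 = 0 then g (j/2) else - g (k+1-j/2) with hmfn
  have hmeven : ∀ j, j % 2 = 0 → mfn j = g (j/2) := by
    intro j hj
    show (if j % 2 = 0 then g (j/2) else - g (k+1-j/2)) = _
    rw [if_pos hj]
  have hmodd : ∀ j, j % 2 = 1 → mfn j = - g (k+1-j/2) := by
    intro j hj
    show (if j % 2 = 0 then g (j/2) else - g (k+1-j/2)) = _
    rw [if_neg (by omega)]
  have c1 : ∀ t, 2*t+1 ≤ k+1 → - g (k+1-t) < g t := by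
    intro t ht
    have h1 : A t < g t := hAg t (by omega)
    have h2 : A (k+1-t) < g (k+1-t) := hAg (k+1-t) (by omega)
    have h3 : A t = - A (k+1-t) := Asym t (by omega)
    linarith
  have c2 : ∀ t, 2*t+2 ≤ k+1 → g (t+1) < - g (k+1-t) := by
    intro t ht
    have h1 : g (k+1-t) < B (k-t) := by
      have := hgB (k-t) (by omega)
      rwa [show k-t+1 = k+1-t by omega] at this
    have h2 : B t = - B (k-t) := Bsym t (by omega)
    have h3 : g (t+1) < B t := hgB t (by omega)
    linarith
  have mdec : ∀ j, j + 1 ≤ k+1 → mfn (j+1) < mfn j := by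
    intro j hj
    rcases Nat.even_or_odd j with he | ho
    · have hj0 : j % 2 = 0 := Nat.even_iff.mp he
      have e1 : mfn j = g (j/2) := hmeven j hj0
      have e2 : mfn (j+1) = - g (k+1-(j+1)/2) := hmodd (j+1) (by omega)
      have e3 : (j+1)/2 = j/2 := by omega
      rw [e1, e2, e3]
      exact c1 (j/2) (by omega)
    · have hj1 : j % 2 = 1 := Nat.odd_iff.mp ho
      have e1 : mfn j = - g (k+1-j/2) := hmodd j hj1
      have e2 : mfn (j+1) = g ((j+1)/2) := hmeven (j+1) (by omega)
      have e3 : (j+1)/2 = j/2 + 1 := by omega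
      rw [e1, e2, e3]
      exact c2 (j/2) (by omega)
  have mlast : 0 < mfn (k+1) := by
    rcases Nat.even_or_odd (k+1) with he | ho
    · have hp : (k+1) % 2 = 0 := Nat.even_iff.mp he
      rw [hmeven (k+1) hp]
      set t := (k+1)/2 with htdef
      have ht1 : k+1-t = t := by omega
      have hA0 : A t = 0 := by
        have := Asym t (by omega)
        rw [ht1] at this
        linarith
      have := hAg t (by omega)
      linarith
    · have hp : (k+1) % 2 = 1 := Nat.odd_iff.mp ho
      rw [hmodd (k+1) hp]
      set t := (k+1)/2 with htdef
      have ht1 : k-t = t := by omega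
      have hB0 : B t = 0 := by
        have := Bsym t (by omega)
        rw [ht1] at this
        linarith
      have h1 : g (t+1) < B t := hgB t (by omega)
      have ht2 : k+1-(k+1)/2 = t+1 := by omega
      rw [ht2]
      linarith
  have mpos : ∀ j ≤ k+1, 0 < mfn j := by
    intro j hj
    rcases Nat.lt_or_ge j (k+1) with h | h
    · have := dec_of_consec mfn (k+1) mdec j (k+1) h (le_refl _)
      linarith
    · have : j = k+1 := by omega
      rw [this]; exact mlast
  have hsq : ∀ (j : ℕ) (x : ℝ), (-1:ℝ)^j * ((-1:ℝ)^j * x) = x := by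
    intro j x
    rw [← mul_assoc, ← pow_add, ← two_mul, pow_mul]
    norm_num
  refine ⟨fun i => (-1:ℝ)^(i:ℕ) * mfn i, ⟨?_, ?_⟩, ?_⟩
  · intro i
    rw [hsq]
    exact mpos i (by omega)
  · intro i j hij
    show (-1:ℝ)^(j:ℕ) * ((-1:ℝ)^(j:ℕ) * mfn j) < (-1:ℝ)^(i:ℕ) * ((-1:ℝ)^(i:ℕ) * mfn i)
    rw [hsq, hsq]
    exact dec_of_consec mfn (k+1) mdec i j hij (by omega)
  · rw [hg]
    set sig : Fin (k+2) → Fin (k+2) := fun i =>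
      ⟨if (i:ℕ) % 2 = 0 then (i:ℕ)/2 else k+1-(i:ℕ)/2, by have := i.isLt; split_ifs <;> omega⟩ with hsig
    have hval : ∀ i : Fin (k+2), (-1:ℝ)^(i:ℕ) * mfn i = g ((sig i : ℕ)) := by
      intro i
      rcases Nat.even_or_odd (i:ℕ) with he | ho
      · have hp : (i:ℕ) % 2 = 0 := Nat.even_iff.mp he
        rw [hmeven _ hp, he.neg_one_pow, one_mul]
        have : ((sig i : ℕ)) = (i:ℕ)/2 := by
          show (if (i:ℕ) % 2 = 0 then (i:ℕ)/2 else k+1-(i:ℕ)/2) = (i:ℕ)/2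
          rw [if_pos hp]
        rw [this]
      · have hp : (i:ℕ) % 2 = 1 := Nat.odd_iff.mp ho
        rw [hmodd _ hp, ho.neg_one_pow]
        have : ((sig i : ℕ)) = k+1-(i:ℕ)/2 := by
          show (if (i:ℕ) % 2 = 0 then (i:ℕ)/2 else k+1-(i:ℕ)/2) = k+1-(i:ℕ)/2
          rw [if_neg (by omega)]
        rw [this]
        ring
    have hinj : Function.Injective sig := by
      intro i j hij
      have h1 : (sig i : ℕ) = (sig j : ℕ) := by rw [hij]
      simp only [hsig] at h1
      have hi2 := i.isLt
      have hj2 := j.isLt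
      have : (i:ℕ) = (j:ℕ) := by
        split_ifs at h1 <;> omega
      exact Fin.ext this
    have hbij : Function.Bijective sig := Finite.injective_iff_bijective.mp hinj
    have hcomp : ∏ i : Fin (k+2), (X - C (g ((sig i : ℕ)))) =
        ∏ j : Fin (k+2), (X - C (g (j : ℕ))) :=
      Function.Bijective.prod_comp hbij (fun j => X - C (g (j:ℕ)))
    calc pr (k+2) g = ∏ i ∈ Finset.range (k+2), (X - C (g i)) := rfl
      _ = ∏ j : Fin (k+2), (X - C (g (j:ℕ))) := by rw [Finset.prod_range]
      _ = ∏ i : Fin (k+2), (X - C (g ((sig i : ℕ)))) := hcomp.symm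
      _ = ∏ i : Fin (k+2), (X - C ((-1:ℝ)^(i:ℕ) * mfn i)) := by
          apply Finset.prod_congr rfl
          intro i _
          rw [hval i]

lemma charmatrix_submatrix {n m : ℕ} (M : Matrix (Fin n) (Fin n) ℝ) (f : Fin m → Fin n)
    (hf : Function.Injective f) :
    (Matrix.charmatrix M).submatrix f f = Matrix.charmatrix (M.submatrix f f) := by
  ext i j
  by_cases h : i = j
  · subst h
    simp [Matrix.submatrix_apply, Matrix.charmatrix_apply_eq]
  · have hfij : f i ≠ f j := fun hc => h (hf hc)
    rw [Matrix.submatrix_apply, Matrix.charmatrix_apply_ne _ _ _ hfij,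
      Matrix.charmatrix_apply_ne _ _ _ h, Matrix.submatrix_apply]

lemma sub_succ (a : ℕ → ℝ) (k : ℕ) :
    (antiBidiag (k+2) a).submatrix Fin.succ Fin.succ
      = (antiBidiag (k+1) a).submatrix Fin.rev Fin.rev := by
  ext i j
  simp only [Matrix.submatrix_apply, antiBidiag, Matrix.of_apply, Fin.val_succ, Fin.val_rev]
  have hi := i.isLt
  have hj := j.isLt
  split_ifs with h1 h2 h3 h4 h5 h6 h7 h8 <;> first | rfl | (congr 1; omega) | omega

lemma sub_mid (a : ℕ → ℝ) (k : ℕ) :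
    (antiBidiag (k+2) a).submatrix (fun i : Fin k => i.succ.castSucc)
      (fun i : Fin k => i.succ.castSucc) = antiBidiag k a := by
  ext i j
  simp only [Matrix.submatrix_apply, antiBidiag, Matrix.of_apply, Fin.coe_castSucc, Fin.val_succ]
  have hi := i.isLt
  have hj := j.isLt
  split_ifs with h1 h2 h3 h4 h5 h6 h7 h8 <;> first | rfl | (congr 1; omega) | omega

lemma charpoly_sub_succ (a : ℕ → ℝ) (k : ℕ) :
    ((antiBidiag (k+2) a).submatrix Fin.succ Fin.succ).charpoly
      = (antiBidiag (k+1) a).charpoly := by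
  rw [sub_succ]
  have : (antiBidiag (k+1) a).submatrix Fin.rev Fin.rev
      = Matrix.reindex Fin.revPerm.symm Fin.revPerm.symm (antiBidiag (k+1) a) := by
    rw [Matrix.reindex_apply, Equiv.symm_symm]
    rfl
  rw [this, Matrix.charpoly_reindex]

lemma antiBidiag_apply_00 (a : ℕ → ℝ) (k : ℕ) :
    antiBidiag (k+2) a 0 0 = 0 := by
  simp only [antiBidiag, Matrix.of_apply, Fin.val_zero]
  split_ifs <;> first | rfl | omega

lemma charpoly_rec (a : ℕ → ℝ) (k : ℕ) :
    (antiBidiag (k+2) a).charpoly =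
      X * (antiBidiag (k+1) a).charpoly - (C (a (k+2)))^2 * (antiBidiag k a).charpoly := by
  classical
  set A := antiBidiag (k+2) a with hA
  set CM := Matrix.charmatrix A with hCM
  have hdet : A.charpoly = CM.det := rfl
  rw [hdet, Matrix.det_succ_row_zero]
  set f : Fin (k+2) → Polynomial ℝ := fun j =>
    (-1 : Polynomial ℝ)^(j:ℕ) * CM 0 j * (CM.submatrix Fin.succ j.succAbove).det with hf
  have hA0j : ∀ j : Fin (k+2), j ≠ 0 → j ≠ Fin.last (k+1) → A 0 j = 0 := by
    intro j hj0 hjl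
    have h1 : (j:ℕ) ≠ k+1 := fun hc => hjl (Fin.ext hc)
    have h0 : (j:ℕ) ≠ 0 := fun hc => hj0 (Fin.ext hc)
    have hlt := j.isLt
    simp only [hA, antiBidiag, Matrix.of_apply, Fin.val_zero]
    split_ifs <;> first | rfl | (simp_all <;> intro h <;> omega)
  have hsum : ∑ j : Fin (k+2), f j = f 0 + f (Fin.last (k+1)) := by
    have hne : (0 : Fin (k+2)) ≠ Fin.last (k+1) := by
      intro hc
      have := congrArg Fin.val hc
      simp at this
    rw [← Finset.sum_pair hne]
    apply (Finset.sum_subset (Finset.subset_univ _) _).symm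
    intro j _ hj
    simp only [Finset.mem_insert, Finset.mem_singleton] at hj
    push_neg at hj
    have hz : CM 0 j = 0 := by
      rw [hCM, Matrix.charmatrix_apply_ne _ _ _ (Ne.symm hj.1), hA0j j hj.1 hj.2]
      simp
    rw [hf]
    simp only [hz]
    ring
  rw [hsum]
  -- term at 0
  have hterm0 : f 0 = X * (antiBidiag (k+1) a).charpoly := by
    rw [hf]
    simp only [Fin.val_zero, pow_zero, one_mul, Fin.succAbove_zero]
    have h00 : CM 0 0 = X := by
      rw [hCM, Matrix.charmatrix_apply_eq, hA, antiBidiag_apply_00]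
      simp
    rw [h00, hCM, charmatrix_submatrix _ _ (Fin.succ_injective _)]
    rw [show (Matrix.charmatrix (A.submatrix Fin.succ Fin.succ)).det
      = (A.submatrix Fin.succ Fin.succ).charpoly from rfl]
    rw [hA, charpoly_sub_succ]
  -- term at last
  have hlastval : A 0 (Fin.last (k+1)) = a (k+2) := by
    simp only [hA, antiBidiag, Matrix.of_apply, Fin.val_zero, Fin.val_last]
    simp only [show (0:ℕ) + (k+1) + 1 = k+2 by omega, if_true]
    norm_num
  have hterm1 : f (Fin.last (k+1)) = - ((C (a (k+2)))^2 * (antiBidiag k a).charpoly) := by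
    simp only [hf]
    have hne : (0 : Fin (k+2)) ≠ Fin.last (k+1) := by
      intro hc
      have := congrArg Fin.val hc
      simp at this
    have hCl : CM 0 (Fin.last (k+1)) = - C (a (k+2)) := by
      rw [hCM, Matrix.charmatrix_apply_ne _ _ _ hne, hlastval]
    rw [hCl, Fin.succAbove_last]
    -- expand the (k+1)-minor along column 0
    set N := CM.submatrix Fin.succ (Fin.castSucc : Fin (k+1) → Fin (k+2)) with hN
    have hNdet : N.det = ∑ i : Fin (k+1),
        (-1:Polynomial ℝ)^(i:ℕ) * N i 0 * (N.submatrix i.succAbove Fin.succ).det :=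
      Matrix.det_succ_column_zero N
    have hNi0 : ∀ i : Fin (k+1), i ≠ Fin.last k → N i 0 = 0 := by
      intro i hi
      have hlt := i.isLt
      have h1 : (i:ℕ) ≠ k := fun hc => hi (Fin.ext hc)
      have hsne : (Fin.succ i : Fin (k+2)) ≠ Fin.castSucc 0 := by
        intro hc
        have := congrArg Fin.val hc
        simp at this
      rw [hN, Matrix.submatrix_apply, hCM, Matrix.charmatrix_apply_ne _ _ _ hsne]
      have : A (Fin.succ i) (Fin.castSucc 0) = 0 := by
        simp only [hA, antiBidiag, Matrix.of_apply, Fin.val_succ, Fin.coe_castSucc, Fin.val_zero]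
        split_ifs <;> first | rfl | (simp_all <;> intro h <;> omega)
      rw [this]
      simp
    have hNlast : N (Fin.last k) 0 = - C (a (k+2)) := by
      have hsne : (Fin.succ (Fin.last k) : Fin (k+2)) ≠ Fin.castSucc 0 := by
        intro hc
        have := congrArg Fin.val hc
        simp at this
      rw [hN, Matrix.submatrix_apply, hCM, Matrix.charmatrix_apply_ne _ _ _ hsne]
      have : A (Fin.succ (Fin.last k)) (Fin.castSucc 0) = a (k+2) := by
        simp only [hA, antiBidiag, Matrix.of_apply, Fin.val_succ, Fin.coe_castSucc, Fin.val_zero,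
          Fin.val_last, min_zero, Nat.mul_zero, Nat.sub_zero, if_true]
      rw [this]
    have hsum2 : N.det = (-1:Polynomial ℝ)^k * (- C (a (k+2)))
        * (N.submatrix (Fin.last k).succAbove Fin.succ).det := by
      rw [hNdet]
      rw [Finset.sum_eq_single (Fin.last k)]
      · rw [hNlast]
        simp
      · intro i _ hi
        rw [hNi0 i hi]
        ring
      · intro h
        exact absurd (Finset.mem_univ _) h
    have hminor : (N.submatrix (Fin.last k).succAbove Fin.succ).det
        = (antiBidiag k a).charpoly := by
      have heq : N.submatrix (Fin.last k).succAbove Fin.succ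
          = CM.submatrix (fun i : Fin k => i.succ.castSucc) (fun i : Fin k => i.succ.castSucc) := by
        ext i j
        simp only [hN, Matrix.submatrix_submatrix, Matrix.submatrix_apply, Function.comp,
          Fin.succAbove_last, Fin.succ_castSucc]
      rw [heq, hCM, charmatrix_submatrix _ _ ?hinj]
      case hinj =>
        intro i j hij
        have := congrArg Fin.val hij
        simp at this
        exact Fin.ext this
      rw [hA, sub_mid]
      rfl
    rw [hsum2, hminor]
    have hpow : (-1:Polynomial ℝ)^((Fin.last (k+1) : Fin (k+2)):ℕ) * (-1:Polynomial ℝ)^k = -1 := by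
      rw [Fin.val_last, ← pow_add, show k+1+k = 2*k+1 by omega, pow_succ, pow_mul]
      norm_num
    calc (-1:Polynomial ℝ)^((Fin.last (k+1) : Fin (k+2)):ℕ) * (- C (a (k+2)))
          * ((-1:Polynomial ℝ)^k * (- C (a (k+2))) * (antiBidiag k a).charpoly)
        = ((-1:Polynomial ℝ)^((Fin.last (k+1)  : Fin (k+2)):ℕ) * (-1:Polynomial ℝ)^k)
          * (C (a (k+2)) * C (a (k+2)) * (antiBidiag k a).charpoly) := by ring
      _ = - ((C (a (k+2)))^2 * (antiBidiag k a).charpoly) := by rw [hpow]; ring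
  rw [hterm0, hterm1]
  ring

lemma charpoly_base1 (a : ℕ → ℝ) : (antiBidiag 1 a).charpoly = X - C (a 1) := by
  have h : (antiBidiag 1 a) 0 0 = a 1 := by
    simp only [antiBidiag, Matrix.of_apply, Fin.val_zero]
    norm_num
  show (Matrix.charmatrix (antiBidiag 1 a)).det = _
  rw [Matrix.det_fin_one, Matrix.charmatrix_apply_eq, h]

lemma P_eq (a : ℕ → ℝ) (n : ℕ) (d : ℕ → ℝ) (hda : ∀ j, 2 ≤ j → j ≤ n → d j = (a j)^2) :
    ∀ m, m + 1 ≤ n → (antiBidiag (m+1) a).charpoly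
      = S d (m+1) - C (a 1) * S (fun j => d (j+1)) m := by
  intro m
  induction m using Nat.strong_induction_on with
  | _ m ih =>
    match m with
    | 0 =>
      intro _
      rw [charpoly_base1]
      show _ = X - C (a 1) * 1
      ring
    | 1 =>
      intro hn
      have h2 : C (d 2) = (C (a 2))^2 := by
        rw [hda 2 (le_refl 2) hn, C_pow]
      show (antiBidiag (0+2) a).charpoly = _
      rw [charpoly_rec a 0, charpoly_base1]
      show _ = (X * X - C (d 2) * 1) - C (a 1) * X
      rw [h2]
      have h0 : (antiBidiag 0 a).charpoly = 1 := by
        show (Matrix.charmatrix (antiBidiag 0 a)).det = 1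
        rw [Matrix.det_fin_zero]
      rw [h0]
      ring
    | (m+2) =>
      intro hn
      have e1 := ih (m+1) (by omega) (by omega)
      have e2 := ih m (by omega) (by omega)
      have hrec := charpoly_rec a (m+1)
      rw [show m+2+1 = m+1+2 by omega, hrec, e1, e2]
      have hd3 : C (d (m+3)) = (C (a (m+3)))^2 := by
        rw [hda (m+3) (by omega) (by omega), C_pow]
      have s1 : S d (m+2+1) = X * S d (m+2) - C (d (m+3)) * S d (m+1) := rfl
      have s2 : S (fun j => d (j+1)) (m+2) = X * S (fun j => d (j+1)) (m+1)
          - C (d (m+3)) * S (fun j => d (j+1)) m := rfl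
      rw [s1, s2, hd3]
      ring

end Stmt13

theorem stmt_13 (n : ℕ) (a : ℕ → ℝ) (ha : ∀ i, 1 ≤ i → i ≤ n → 0 < a i) :
    ∃ l : Fin n → ℝ, AltCond n l ∧
      (antiBidiag n a).charpoly = ∏ i, (X - C (l i)) := by
  match n with
  | 0 =>
    refine ⟨fun _ => 0, ⟨fun i => i.elim0, fun i => i.elim0⟩, ?_⟩
    have h0 : (antiBidiag 0 a).charpoly = 1 := by
      show (Matrix.charmatrix (antiBidiag 0 a)).det = 1
      rw [Matrix.det_fin_zero]
    rw [h0]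
    simp
  | 1 =>
    refine ⟨fun _ => a 1, ⟨?_, ?_⟩, ?_⟩
    · intro i
      have : (i:ℕ) = 0 := by omega
      rw [this]
      simpa using ha 1 (le_refl 1) (le_refl 1)
    · intro i j hij
      exfalso
      have h1 := i.isLt
      have h2 := j.isLt
      have := Fin.lt_def.mp hij
      omega
    · rw [Stmt13.charpoly_base1, Fin.prod_univ_one]
  | (k+2) =>
    classical
    set d : ℕ → ℝ := fun j => if 2 ≤ j ∧ j ≤ k+2 then (a j)^2 else 1 with hd_def
    have hd : ∀ j, 0 < d j := by
      intro j
      show (0:ℝ) < if 2 ≤ j ∧ j ≤ k+2 then (a j)^2 else 1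
      split_ifs with h
      · exact pow_pos (ha j (by omega) h.2) 2
      · norm_num
    have hda : ∀ j, 2 ≤ j → j ≤ k+2 → d j = (a j)^2 := by
      intro j h1 h2
      show (if 2 ≤ j ∧ j ≤ k+2 then (a j)^2 else 1) = _
      rw [if_pos ⟨h1, h2⟩]
    have hP := Stmt13.P_eq a (k+2) d hda (k+1) (by omega)
    obtain ⟨l, halt, hprod⟩ := Stmt13.analytic d hd (a 1) (ha 1 (by omega) (by omega)) k
    refine ⟨l, halt, ?_⟩
    have hP' : (antiBidiag (k+2) a).charpoly
        = Stmt13.S d (k+2) - C (a 1) * Stmt13.S (fun j => d (j+1)) (k+1) := hP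
    rw [hP']
    exact hprod
end

section
/- (Uniqueness) If two symmetric anti-bidiagonal n×n matrices with all parameters positive have the same spectrum, then they are equal. -/
open Polynomial

theorem Polynomial.eq_and_eq_of_C_mul_eq_C_mul {R : Type*} [CommRing R] [IsDomain R]
    {p q : R[X]} {x y : R}
    (hp : p.Monic) (hq : q.Monic) (hpq : p.natDegree = q.natDegree) (hx : x ≠ 0)
    (h : C x * p = C y * q) : x = y ∧ p = q := by
  have hxy : x = y := by
    have := congrArg (coeff · p.natDegree) h
    rwa [coeff_C_mul, coeff_C_mul, hp.coeff_natDegree, hpq, hq.coeff_natDegree, mul_one,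
      mul_one] at this
  exact ⟨hxy, mul_left_cancel₀ (C_ne_zero.2 hx) (hxy ▸ h)⟩

namespace Matrix

variable {R : Type*} [CommRing R]

theorem det_succ_succ_of_row_col_zero {n : ℕ} (M : Matrix (Fin (n + 2)) (Fin (n + 2)) R)
    (hrow : ∀ j : Fin n, M 0 j.succ.succ = 0) (hcol : ∀ i : Fin n, M i.succ.succ 0 = 0) :
    M.det = M 0 0 * (M.submatrix Fin.succ Fin.succ).det
      - M 0 1 * M 1 0 * (M.submatrix (Fin.succ ∘ Fin.succ) (Fin.succ ∘ Fin.succ)).det := by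
  have hminor : (M.submatrix Fin.succ (Fin.succAbove 1)).det
      = M 1 0 * (M.submatrix (Fin.succ ∘ Fin.succ) (Fin.succ ∘ Fin.succ)).det := by
    rw [det_succ_column_zero, Fin.sum_univ_succ]
    simp [hcol, Function.comp_def]
  rw [det_succ_row_zero, Fin.sum_univ_succ, Fin.sum_univ_succ]
  simp [hrow, hminor, sub_eq_add_neg, mul_assoc]

theorem det_sub_single_zero_zero {n : ℕ} (M : Matrix (Fin (n + 1)) (Fin (n + 1)) R) (x : R) :
    (M - single 0 0 x).det = M.det - x * (M.submatrix Fin.succ Fin.succ).det := by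
  have hminor (j : Fin (n + 1)) : (M - single 0 0 x).submatrix Fin.succ j.succAbove
      = M.submatrix Fin.succ j.succAbove := by
    ext k l
    simp [(Fin.succ_ne_zero k).symm]
  rw [det_succ_row_zero, det_succ_row_zero M]
  simp only [hminor, sub_apply, mul_sub, sub_mul, Finset.sum_sub_distrib, single_apply]
  simp

theorem charmatrix_submatrix {m n : Type*} [DecidableEq m] [DecidableEq n] [Fintype m] [Fintype n]
    (M : Matrix n n R) {f : m → n} (hf : Function.Injective f) :
    (charmatrix M).submatrix f f = charmatrix (M.submatrix f f) := by
  ext i j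
  by_cases hij : i = j
  · simp [hij]
  · simp [charmatrix_apply_ne _ _ _ hij, charmatrix_apply_ne _ _ _ (hf.ne hij)]

end Matrix

open Matrix

section Jacobi

variable {R : Type*} [CommRing R]

def jacobiMatrix (d c : ℕ → R) (n : ℕ) : Matrix (Fin n) (Fin n) R :=
  of fun i j =>
    if (i : ℕ) = j then d i
    else if (i : ℕ) + 1 = j then c i
    else if (j : ℕ) + 1 = i then c j
    else 0

theorem jacobiMatrix_submatrix_succ (d c : ℕ → R) (n : ℕ) :
    (jacobiMatrix d c (n + 1)).submatrix Fin.succ Fin.succ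
      = jacobiMatrix (fun i => d (i + 1)) (fun i => c (i + 1)) n := by
  ext i j
  simp only [jacobiMatrix, submatrix_apply, of_apply, Fin.val_succ]
  split_ifs <;> first | rfl | omega

noncomputable def jacobiPoly (c : ℕ → R) (n : ℕ) : R[X] :=
  (jacobiMatrix 0 c n).charpoly

theorem jacobiPoly_zero (c : ℕ → R) : jacobiPoly c 0 = 1 :=
  charpoly_isEmpty

theorem jacobiPoly_one (c : ℕ → R) : jacobiPoly c 1 = X := by
  simp [jacobiPoly, charpoly, jacobiMatrix]

theorem jacobiPoly_add_two (c : ℕ → R) (n : ℕ) :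
    jacobiPoly c (n + 2) = X * jacobiPoly (fun i => c (i + 1)) (n + 1)
      - C (c 0 ^ 2) * jacobiPoly (fun i => c (i + 2)) n := by
  have hzero {i j : Fin (n + 2)} (h : (i : ℕ) + 2 ≤ j ∨ (j : ℕ) + 2 ≤ i) :
      charmatrix (jacobiMatrix 0 c (n + 2)) i j = 0 := by
    rw [charmatrix_apply_ne _ _ _ (by omega), neg_eq_zero, C_eq_zero]
    simp only [jacobiMatrix, of_apply]
    split_ifs <;> first | rfl | omega
  rw [jacobiPoly, charpoly, det_succ_succ_of_row_col_zero _ (fun j => hzero (by simp))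
    (fun i => hzero (by simp)), ← submatrix_submatrix,
    charmatrix_submatrix _ (Fin.succ_injective _), charmatrix_submatrix _ (Fin.succ_injective _),
    jacobiMatrix_submatrix_succ, jacobiMatrix_submatrix_succ]
  simp [jacobiMatrix, jacobiPoly, charpoly, sq, mul_assoc]

theorem jacobiPoly_monic (c : ℕ → R) (n : ℕ) : (jacobiPoly c n).Monic :=
  charpoly_monic _

theorem natDegree_jacobiPoly [Nontrivial R] (c : ℕ → R) (n : ℕ) :
    (jacobiPoly c n).natDegree = n := by
  simp [jacobiPoly]

theorem coeff_jacobiPoly_of_mod_two_ne (c : ℕ → R) {n j : ℕ} (h : j % 2 ≠ n % 2) :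
    (jacobiPoly c n).coeff j = 0 := by
  induction n using Nat.twoStepInduction generalizing c j with
  | zero => simp [jacobiPoly_zero, coeff_one, show j ≠ 0 by omega]
  | one => simp [jacobiPoly_one, coeff_X, show 1 ≠ j by omega]
  | more n ih₀ ih₁ =>
    rw [jacobiPoly_add_two, coeff_sub, coeff_C_mul, ih₀ _ (by omega : j % 2 ≠ n % 2)]
    rcases j with _ | j
    · simp
    · rw [coeff_X_mul, ih₁ _ (by omega)]
      ring

theorem charpoly_jacobiMatrix_single_zero (x : R) (c : ℕ → R) (n : ℕ) :
    (jacobiMatrix (Pi.single 0 x) c (n + 1)).charpoly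
      = jacobiPoly c (n + 1) - C x * jacobiPoly (fun i => c (i + 1)) n := by
  have hcharmatrix : charmatrix (jacobiMatrix (Pi.single 0 x) c (n + 1))
      = charmatrix (jacobiMatrix 0 c (n + 1)) - single 0 0 (C x) := by
    ext i j : 1
    rw [Matrix.sub_apply, charmatrix_apply, charmatrix_apply]
    simp only [jacobiMatrix, of_apply, single_apply, Pi.single_apply, diagonal_apply, Fin.ext_iff,
      Fin.val_zero]
    split_ifs <;> first | (exfalso; omega) | simp
  rw [charpoly, hcharmatrix, det_sub_single_zero_zero,
    charmatrix_submatrix _ (Fin.succ_injective _), jacobiMatrix_submatrix_succ]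
  rfl

theorem C_mul_jacobiPoly_eq_of_sub_eq_sub {c c' b b' : ℕ → R} {x y : R} {n : ℕ}
    (h : jacobiPoly c (n + 1) - C x * jacobiPoly b n
      = jacobiPoly c' (n + 1) - C y * jacobiPoly b' n) :
    C x * jacobiPoly b n = C y * jacobiPoly b' n := by
  ext j
  by_cases hj : j % 2 = n % 2
  · have hcoeff := congrArg (coeff · j) h
    simpa only [coeff_sub, coeff_jacobiPoly_of_mod_two_ne _ (show j % 2 ≠ (n + 1) % 2 by omega),
      zero_sub, neg_inj] using hcoeff
  · simp [coeff_jacobiPoly_of_mod_two_ne _ hj]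

theorem eq_of_jacobiPoly_eq [LinearOrder R] [IsStrictOrderedRing R] {c c' : ℕ → R} {n : ℕ}
    (hc : ∀ i < n, 0 < c i) (hc' : ∀ i < n, 0 < c' i)
    (h₁ : jacobiPoly c (n + 1) = jacobiPoly c' (n + 1))
    (h₀ : jacobiPoly (fun i => c (i + 1)) n = jacobiPoly (fun i => c' (i + 1)) n) :
    ∀ i < n, c i = c' i := by
  induction n generalizing c c' with
  | zero => simp
  | succ n ih =>
    have hscaled : C (c 0 ^ 2) * jacobiPoly (fun i => c (i + 2)) n
        = C (c' 0 ^ 2) * jacobiPoly (fun i => c' (i + 2)) n := by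
      rw [jacobiPoly_add_two, jacobiPoly_add_two] at h₁
      linear_combination X * h₀ - h₁
    obtain ⟨hsq, htail⟩ := eq_and_eq_of_C_mul_eq_C_mul (jacobiPoly_monic _ _)
      (jacobiPoly_monic _ _) (by simp only [natDegree_jacobiPoly])
      (by have := hc 0 (by omega); positivity) hscaled
    have hhead : c 0 = c' 0 := (sq_eq_sq₀ (hc 0 (by omega)).le (hc' 0 (by omega)).le).1 hsq
    intro i hi
    rcases i with _ | i
    · exact hhead
    · exact ih (fun i hi => hc _ (by omega)) (fun i hi => hc' _ (by omega)) h₀ htail i (by omega)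

end Jacobi

/- The nonzero entries of `antiBidiag n a` form a path graph starting at the diagonal entry `a 1`;
`antiBidiagIndex n k` is its `k`-th vertex, so that `a (k + 2)` joins vertices `k` and `k + 1`. -/
def antiBidiagIndex (n k : ℕ) : ℕ :=
  if (n + k) % 2 = 0 then (n + k) / 2 else (n - 1 - k) / 2

theorem antiBidiagIndex_spec {n k : ℕ} (hk : k < n) :
    antiBidiagIndex n k < n ∧
      (2 * antiBidiagIndex n k = n + k ∨ 2 * antiBidiagIndex n k + k + 1 = n) := by
  unfold antiBidiagIndex
  split_ifs <;> omega

noncomputable def antiBidiagPerm (n : ℕ) : Equiv.Perm (Fin n) :=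
  Equiv.ofBijective (fun k => ⟨antiBidiagIndex n k, (antiBidiagIndex_spec k.isLt).1⟩) <|
    Finite.injective_iff_bijective.mp fun k l hkl => by
      have hk := (antiBidiagIndex_spec k.isLt).2
      have hl := (antiBidiagIndex_spec l.isLt).2
      have hval : antiBidiagIndex n k = antiBidiagIndex n l := congrArg Fin.val hkl
      exact Fin.ext (by omega)

theorem antiBidiag_submatrix_perm (n : ℕ) (a : ℕ → ℝ) :
    (antiBidiag n a).submatrix (antiBidiagPerm n) (antiBidiagPerm n)
      = jacobiMatrix (Pi.single 0 (a 1)) (fun k => a (k + 2)) n := by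
  ext i j
  have hi := antiBidiagIndex_spec i.isLt
  have hj := antiBidiagIndex_spec j.isLt
  have hi' : (antiBidiagPerm n i : ℕ) = antiBidiagIndex n i := rfl
  have hj' : (antiBidiagPerm n j : ℕ) = antiBidiagIndex n j := rfl
  simp only [antiBidiag, jacobiMatrix, submatrix_apply, of_apply, hi', hj', Pi.single_apply]
  split_ifs <;> first | rfl | (exfalso; omega) | exact congrArg a (by omega)

theorem charpoly_antiBidiag (n : ℕ) (a : ℕ → ℝ) :
    (antiBidiag (n + 1) a).charpoly
      = jacobiPoly (fun k => a (k + 2)) (n + 1)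
        - C (a 1) * jacobiPoly (fun k => a (k + 3)) n := by
  rw [← charpoly_reindex (antiBidiagPerm (n + 1)).symm, reindex_apply, Equiv.symm_symm,
    antiBidiag_submatrix_perm, charpoly_jacobiMatrix_single_zero]

theorem antiBidiag_congr {n : ℕ} {a b : ℕ → ℝ} (h : ∀ i, 1 ≤ i → i ≤ n → a i = b i) :
    antiBidiag n a = antiBidiag n b := by
  ext i j
  simp only [antiBidiag, of_apply]
  split_ifs <;> first | rfl | exact h _ (by omega) (by omega)

/-- Two symmetric anti-bidiagonal matrices with positive parameters having the
same spectrum (with multiplicity, i.e. the same characteristic polynomial)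
coincide. -/
theorem stmt_15 (n : ℕ) (a b : ℕ → ℝ)
    (ha : ∀ i, 1 ≤ i → i ≤ n → 0 < a i)
    (hb : ∀ i, 1 ≤ i → i ≤ n → 0 < b i)
    (hspec : (antiBidiag n a).charpoly = (antiBidiag n b).charpoly) :
    antiBidiag n a = antiBidiag n b := by
  cases n with
  | zero => exact Subsingleton.elim _ _
  | succ n =>
    rw [charpoly_antiBidiag, charpoly_antiBidiag] at hspec
    have hcorner := C_mul_jacobiPoly_eq_of_sub_eq_sub hspec
    obtain ⟨h₁, htail⟩ := eq_and_eq_of_C_mul_eq_C_mul (jacobiPoly_monic _ _)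
      (jacobiPoly_monic _ _) (by simp only [natDegree_jacobiPoly]) (ha 1 le_rfl (by omega)).ne'
      hcorner
    have hhead : jacobiPoly (fun k => a (k + 2)) (n + 1)
        = jacobiPoly (fun k => b (k + 2)) (n + 1) := by
      linear_combination hspec + hcorner
    have hoff := eq_of_jacobiPoly_eq (fun i hi => ha (i + 2) (by omega) (by omega))
      (fun i hi => hb (i + 2) (by omega) (by omega)) hhead htail
    refine antiBidiag_congr fun i hi hin => ?_
    match i, hi with
    | 1, _ => exact h₁
    | k + 2, _ => exact hoff k (by omega)
end
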